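/- arXiv:2108.03666 — 6 statements merged into one kernel-verified Lean document; each statement's English description precedes it below -/
import Mathlib

section
/- Define the depth Dp(L) of a K-closed subset L of an FSI-template by the recursion: Dp(L) ≤ 0 iff L = ∅; Dp(L) ≤ ζ+1 iff there is L* ⊆ L with |L*| ≤ 1, L* disjoint from every A ∈ I_t for t ∈ L, Dp(L \ L*) < ζ+1, and for every t ∈ L*, L \ L* ∈ I_t and L \ L* is K-closed; Dp(L) ≤ ζ for limit ζ iff L is the union of a directed increasing family ⟨L_a : a ∈ M⟩ of K-closed sets each of depth < ζ such that every A ∈ I_t with t ∈ L and A ⊆ L is contained in some L_a. Then for K-closed sets L₁ ⊆ L₂: (α) Dp(L₁) ≤ Dp(L₂), and (β) if L₁ ∈ I_t for some t ∈ L₂, then Dp(L₁) < Dp(L₂) (or both are ∞). -/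
universe u

/-- An FSI-template on a linear order `L`. -/
def IsFSITemplate {L : Type u} [LinearOrder L] (I : L → Set (Set L)) : Prop :=
  ∀ t : L, (∀ A ∈ I t, A ⊆ {s | s < t}) ∧ (∅ ∈ I t) ∧
    (∀ A ∈ I t, ∀ B, B ⊆ A → B ∈ I t) ∧ (∀ A ∈ I t, ∀ B ∈ I t, A ∪ B ∈ I t)

/-- A memory choice for a template. -/
def IsMemoryChoice {L : Type u} [LinearOrder L] (I : L → Set (Set L)) (K : L → Set L) : Prop :=
  (∀ t, K t ∈ I t) ∧ ∀ t, ∀ s ∈ K t, K s ⊆ K t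

/-- A set `A` is `K`-closed when `t ∈ A → K t ⊆ A`. -/
def KClosed {L : Type u} [LinearOrder L] (K : L → Set L) (A : Set L) : Prop :=
  ∀ t ∈ A, K t ⊆ A

/-- `DpLe I K S ζ` formalizes "the (𝔱,K)-depth of the K-closed set `S` is at most `ζ`":
`Dp(S) ≤ 0` iff `S = ∅`; `Dp(S) ≤ ζ+1` via removal of a set `L*` of at most one point,
disjoint from every `A ∈ I t` (`t ∈ S`), with `S \ L* ∈ I t` for `t ∈ L*`, `S \ L*`
K-closed and of depth `≤ ζ`; `Dp(S) ≤ ζ` for `ζ` limit via a directed increasing family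
of K-closed sets of smaller depth whose union is `S` and which absorbs every `A ∈ I t`
with `t ∈ S`, `A ⊆ S`. -/
inductive DpLe {L : Type u} [LinearOrder L] (I : L → Set (Set L)) (K : L → Set L) :
    Set L → Ordinal.{u} → Prop where
  | zero : DpLe I K ∅ 0
  | succ (S : Set L) (ζ : Ordinal.{u}) (Lstar : Set L)
      (hsub : Lstar ⊆ S) (hsing : Lstar.Subsingleton)
      (hdisj : ∀ t ∈ S, ∀ A ∈ I t, A ∩ Lstar = ∅)
      (hcl : KClosed K (S \ Lstar))
      (hmem : ∀ t ∈ Lstar, S \ Lstar ∈ I t)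
      (h : DpLe I K (S \ Lstar) ζ) : DpLe I K S (ζ + 1)
  | limit (S : Set L) (ζ : Ordinal.{u}) (hζ : Order.IsSuccLimit ζ) (𝒜 : Set (Set L))
      (hcl : ∀ A ∈ 𝒜, KClosed K A) (hsub : ∀ A ∈ 𝒜, A ⊆ S)
      (hdir : DirectedOn (· ⊆ ·) 𝒜) (hU : ⋃₀ 𝒜 = S)
      (hcov : ∀ t ∈ S, ∀ A ∈ I t, A ⊆ S → ∃ B ∈ 𝒜, A ⊆ B)
      (d : Set L → Ordinal.{u}) (hd : ∀ A ∈ 𝒜, d A < ζ)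
      (h : ∀ A ∈ 𝒜, DpLe I K A (d A)) : DpLe I K S ζ

/-! Intersecting a witness for `Dp(L₂) ≤ ζ` with `L₁` gives a witness for `Dp(L₁) ≤ ζ`: the
removed point survives or disappears, and a directed family restricts to a directed family. If
moreover `L₁ ∈ I t` for some `t ∈ L₂`, then `L₁` avoids the removed point in the successor case
and lies inside a single member of the family in the limit case, so the top step of the
recursion can be skipped. -/

section Depth

variable {L : Type u} [LinearOrder L] {I : L → Set (Set L)} {K : L → Set L}

theorem KClosed.inter {A B : Set L} (hA : KClosed K A) (hB : KClosed K B) :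
    KClosed K (A ∩ B) :=
  fun t ht _ hs => ⟨hA t ht.1 hs, hB t ht.2 hs⟩

theorem KClosed.diff {A X : Set L} (hA : KClosed K A) (hX : ∀ t ∈ A, K t ∩ X = ∅) :
    KClosed K (A \ X) :=
  fun t ht _ hs => ⟨hA t ht.1 hs, fun hsX => (hX t ht.1).le ⟨hs, hsX⟩⟩

theorem DpLe.mono (hdown : ∀ t, ∀ A ∈ I t, ∀ B ⊆ A, B ∈ I t) (hK : ∀ t, K t ∈ I t)
    {S T : Set L} {ζ : Ordinal.{u}} (h : DpLe I K S ζ) (hT : KClosed K T) (hTS : T ⊆ S) :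
    DpLe I K T ζ := by
  induction h generalizing T with
  | zero => exact Set.subset_empty_iff.1 hTS ▸ .zero
  | succ S ζ Lstar _ hsing hdisj _ hmem _ ih =>
    have hrest : T \ (Lstar ∩ T) ⊆ S \ Lstar := by
      rw [Set.sdiff_inter_self_eq_sdiff]; exact Set.sdiff_subset_sdiff_left hTS
    have hcl : KClosed K (T \ (Lstar ∩ T)) := by
      rw [Set.sdiff_inter_self_eq_sdiff]; exact hT.diff fun t ht => hdisj t (hTS ht) _ (hK t)
    refine .succ T ζ (Lstar ∩ T) Set.inter_subset_right (hsing.anti Set.inter_subset_left)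
      (fun t ht A hA => ?_) hcl (fun t ht => hdown t _ (hmem t ht.1) _ hrest) (ih hcl hrest)
    exact Set.subset_empty_iff.1 <|
      hdisj t (hTS ht) A hA ▸ Set.inter_subset_inter_right A Set.inter_subset_left
  | limit S ζ hζ 𝒜 hcl _ hdir hU hcov d hd _ ih =>
    set pick := Function.invFunOn (· ∩ T) 𝒜
    have hpick : ∀ B ∈ (· ∩ T) '' 𝒜, pick B ∈ 𝒜 ∧ pick B ∩ T = B :=
      fun B hB => ⟨Function.invFunOn_mem hB, Function.invFunOn_eq hB⟩
    refine .limit T ζ hζ ((· ∩ T) '' 𝒜)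
      (Set.forall_mem_image.2 fun A hA => (hcl A hA).inter hT)
      (Set.forall_mem_image.2 fun _ _ => Set.inter_subset_right)
      (directedOn_image.2 <| hdir.mono fun _ _ hAB => Set.inter_subset_inter_left T hAB)
      ?_ (fun t ht A hA hAT => ?_) (d ∘ pick) (fun B hB => hd _ (hpick B hB).1)
      (fun B hB => ?_)
    · rw [Set.sUnion_image, ← Set.iUnion₂_inter, ← Set.sUnion_eq_biUnion, hU,
        Set.inter_eq_right.2 hTS]
    · obtain ⟨B, hB, hAB⟩ := hcov t (hTS ht) A hA (hAT.trans hTS)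
      exact ⟨B ∩ T, Set.mem_image_of_mem _ hB, Set.subset_inter hAB hAT⟩
    · obtain ⟨hA, hAB⟩ := hpick B hB
      have := ih _ hA ((hcl _ hA).inter hT) Set.inter_subset_left
      rwa [hAB] at this

theorem DpLe.exists_lt_of_mem (hdown : ∀ t, ∀ A ∈ I t, ∀ B ⊆ A, B ∈ I t)
    (hK : ∀ t, K t ∈ I t) {S T : Set L} {ζ : Ordinal.{u}} (h : DpLe I K S ζ)
    (hT : KClosed K T) (hTS : T ⊆ S) {t : L} (ht : t ∈ S) (hTt : T ∈ I t) :
    ∃ ξ < ζ, DpLe I K T ξ := by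
  cases h with
  | zero => exact absurd ht (Set.notMem_empty t)
  | succ S ζ Lstar _ _ hdisj _ _ h =>
    have hTrest : T ⊆ S \ Lstar :=
      Set.subset_sdiff.2 ⟨hTS, Set.disjoint_iff_inter_eq_empty.2 (hdisj t ht T hTt)⟩
    exact ⟨ζ, lt_add_one ζ, h.mono hdown hK hT hTrest⟩
  | limit S ζ _ 𝒜 _ _ _ _ hcov d hd h =>
    obtain ⟨B, hB, hTB⟩ := hcov t ht T hTt hTS
    exact ⟨d B, hd B hB, (h B hB).mono hdown hK hT hTB⟩

end Depth

theorem stmt2_general {L : Type u} [LinearOrder L] (I : L → Set (Set L)) (K : L → Set L)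
    (hI : IsFSITemplate I) (hK : IsMemoryChoice I K)
    (L₁ L₂ : Set L) (h1 : KClosed K L₁) (hsub : L₁ ⊆ L₂) :
    (∀ ζ, DpLe I K L₂ ζ → DpLe I K L₁ ζ) ∧
    ((∃ t ∈ L₂, L₁ ∈ I t) → ∀ ζ, DpLe I K L₂ ζ → ∃ ξ < ζ, DpLe I K L₁ ξ) := by
  have hdown : ∀ t, ∀ A ∈ I t, ∀ B ⊆ A, B ∈ I t := fun t => (hI t).2.2.1
  refine ⟨fun ζ h => h.mono hdown hK.1 h1 hsub, ?_⟩
  rintro ⟨t, ht, hL₁⟩ ζ h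
  exact h.exists_lt_of_mem hdown hK.1 h1 hsub ht hL₁

/-- Monotonicity of depth: for K-closed `L₁ ⊆ L₂`, (α) `Dp(L₁) ≤ Dp(L₂)`; and
(β) if moreover `L₁ ∈ I t` for some `t ∈ L₂`, then `Dp(L₁) < Dp(L₂)` (or both are `∞`). -/
theorem stmt2 {L : Type u} [LinearOrder L] (I : L → Set (Set L)) (K : L → Set L)
    (hI : IsFSITemplate I) (hK : IsMemoryChoice I K)
    (L₁ L₂ : Set L) (h1 : KClosed K L₁) (h2 : KClosed K L₂) (hsub : L₁ ⊆ L₂) :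
    (∀ ζ, DpLe I K L₂ ζ → DpLe I K L₁ ζ) ∧
    ((∃ t ∈ L₂, L₁ ∈ I t) → ∀ ζ, DpLe I K L₂ ζ → ∃ ξ < ζ, DpLe I K L₁ ξ) :=
  stmt2_general I K hI hK L₁ L₂ h1 hsub
end

section
/- With Dp as defined by the depth recursion for a smooth FSI-template (Dp(L) < ∞ for the whole order): if L₁ ⊆ L₂ ⊆ L are K-closed, then the restricted template t↾L₂ (with ideals I_t ∩ 𝒫(L₂)) is an FSI-template, L₁ is K↾L₂-closed, and the depth of L₁ computed inside t↾L₂ equals its depth computed in t. -/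
universe u

/-!
Transport depth derivations along the inclusion `L₂ ↪ L`, by induction on the
derivation. A derivation in `𝔱` of a subset of `L₂` is pulled back by preimage; one in
`𝔱↾L₂` is pushed forward by image; images of `K↾L₂`-closed sets are `K`-closed because
`L₂` is. For the disjointness and covering conditions, a set `A ∈ I_t` is replaced by its
trace `A ∩ L₂`, which is an ideal of `𝔱↾L₂` by downward closure of `I_t`.
-/

open Set

lemma image_val_preimage_val_of_subset {α : Type*} {L₂ S : Set α} (hS : S ⊆ L₂) :
    Subtype.val '' (Subtype.val ⁻¹' S : Set L₂) = S := by
  rw [Subtype.image_preimage_val, inter_eq_self_of_subset_right hS]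

section Restriction

variable {L : Type u} [LinearOrder L]

/-- The ideals of `𝔱↾L₂`, i.e. `I_t ∩ 𝒫(L₂)`, transported to the subtype `L₂`. -/
def restrictIdeals (I : L → Set (Set L)) (L₂ : Set L) : L₂ → Set (Set L₂) :=
  fun t => {A | Subtype.val '' A ∈ I t}

def restrictMemory (K : L → Set L) (L₂ : Set L) : L₂ → Set L₂ :=
  fun t => {s | (s : L) ∈ K t}

lemma IsFSITemplate.restrict {I : L → Set (Set L)} (hI : IsFSITemplate I) (L₂ : Set L) :
    IsFSITemplate (restrictIdeals I L₂) := by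
  intro t
  obtain ⟨hlt, hempty, hdown, hunion⟩ := hI t
  refine ⟨fun A hA s hs => hlt _ hA (mem_image_of_mem _ hs), ?_, ?_, ?_⟩
  · change Subtype.val '' ∅ ∈ I t
    rwa [image_empty]
  · exact fun A hA B hB => hdown _ hA _ (image_mono hB)
  · intro A hA B hB
    change Subtype.val '' (A ∪ B) ∈ I t
    rw [image_union]
    exact hunion _ hA _ hB

lemma KClosed.preimage_val {K : L → Set L} {S : Set L} (hS : KClosed K S) (L₂ : Set L) :
    KClosed (restrictMemory K L₂) (Subtype.val ⁻¹' S) :=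
  fun t ht _ hs => hS t ht hs

lemma KClosed.image_val {K : L → Set L} {L₂ : Set L} {T : Set L₂}
    (hT : KClosed (restrictMemory K L₂) T) (h2 : KClosed K L₂) :
    KClosed K (Subtype.val '' T) := by
  rintro _ ⟨t, ht, rfl⟩ s hs
  exact ⟨⟨s, h2 t t.2 hs⟩, hT t ht hs, rfl⟩

lemma DpLe.preimage_val {I : L → Set (Set L)} {K : L → Set L} {L₂ S : Set L}
    {ζ : Ordinal.{u}} (h : DpLe I K S ζ) (hS : S ⊆ L₂) :
    DpLe (restrictIdeals I L₂) (restrictMemory K L₂) (Subtype.val ⁻¹' S) ζ := by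
  induction h with
  | zero => simpa using DpLe.zero
  | succ S ζ Lstar hsubL hsing hdisj hcl hmem _ ih =>
    have hS' : S \ Lstar ⊆ L₂ := sdiff_subset.trans hS
    refine DpLe.succ _ ζ (Subtype.val ⁻¹' Lstar) (preimage_mono hsubL)
      (hsing.preimage Subtype.val_injective) ?_ (hcl.preimage_val L₂) ?_ (ih hS')
    · intro t ht A hA
      rw [← preimage_image_eq A Subtype.val_injective, ← preimage_inter, hdisj t ht _ hA,
        preimage_empty]
    · intro t ht
      change Subtype.val '' (Subtype.val ⁻¹' (S \ Lstar)) ∈ I t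
      rw [image_val_preimage_val_of_subset hS']
      exact hmem t ht
  | limit S ζ hζ 𝒜 hcl hsubA hdir hU hcov d hd _ ih =>
    have hB (B) (hB : B ∈ 𝒜) : B ⊆ L₂ := (hsubA B hB).trans hS
    refine DpLe.limit _ ζ hζ (preimage Subtype.val '' 𝒜) ?_ ?_
      (hdir.mono_comp fun _ _ => preimage_mono) ?_ ?_ (fun T => d (Subtype.val '' T)) ?_ ?_
    · rintro _ ⟨B, hB, rfl⟩
      exact (hcl B hB).preimage_val L₂
    · rintro _ ⟨B, hB, rfl⟩
      exact preimage_mono (hsubA B hB)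
    · rw [sUnion_image, ← preimage_sUnion, hU]
    · intro t ht A hA hAS
      obtain ⟨B, hB𝒜, hAB⟩ := hcov t ht _ hA (image_subset_iff.mpr hAS)
      exact ⟨_, mem_image_of_mem _ hB𝒜, image_subset_iff.mp hAB⟩
    · rintro _ ⟨B, hB𝒜, rfl⟩
      simpa only [image_val_preimage_val_of_subset (hB B hB𝒜)] using hd B hB𝒜
    · rintro _ ⟨B, hB𝒜, rfl⟩
      simpa only [image_val_preimage_val_of_subset (hB B hB𝒜)] using ih B hB𝒜 (hB B hB𝒜)

lemma DpLe.image_val {I : L → Set (Set L)} {K : L → Set L} {L₂ : Set L}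
    (hI : ∀ t, ∀ A ∈ I t, ∀ B ⊆ A, B ∈ I t) (h2 : KClosed K L₂) {T : Set L₂}
    {ζ : Ordinal.{u}} (h : DpLe (restrictIdeals I L₂) (restrictMemory K L₂) T ζ) :
    DpLe I K (Subtype.val '' T) ζ := by
  induction h with
  | zero => simpa using DpLe.zero
  | succ T ζ Lstar hsubL hsing hdisj hcl hmem _ ih =>
    have hdiff : Subtype.val '' T \ Subtype.val '' Lstar = Subtype.val '' (T \ Lstar) :=
      (image_sdiff Subtype.val_injective _ _).symm
    refine DpLe.succ _ ζ (Subtype.val '' Lstar) (image_mono hsubL) (hsing.image _) ?_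
      (hdiff ▸ hcl.image_val h2) ?_ (hdiff ▸ ih)
    · rintro _ ⟨t, ht, rfl⟩ A hA
      have hA₂ : Subtype.val ⁻¹' A ∈ restrictIdeals I L₂ t :=
        hI t A hA _ (image_preimage_subset _ _)
      rw [inter_comm, ← image_inter_preimage, inter_comm, hdisj t ht _ hA₂, image_empty]
    · rintro _ ⟨t, ht, rfl⟩
      exact hdiff ▸ hmem t ht
  | limit T ζ hζ 𝒜 hcl hsubA hdir hU hcov d hd _ ih =>
    refine DpLe.limit _ ζ hζ (image Subtype.val '' 𝒜) ?_ ?_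
      (hdir.mono_comp fun _ _ => image_mono) ?_ ?_ (fun B => d (Subtype.val ⁻¹' B)) ?_ ?_
    · rintro _ ⟨B, hB, rfl⟩
      exact (hcl B hB).image_val h2
    · rintro _ ⟨B, hB, rfl⟩
      exact image_mono (hsubA B hB)
    · rw [← image_sUnion, hU]
    · rintro _ ⟨t, ht, rfl⟩ A hA hAT
      have hA₂ : A ⊆ L₂ := hAT.trans (Subtype.coe_image_subset _ _)
      have hA' : Subtype.val ⁻¹' A ∈ restrictIdeals I L₂ t := by
        change Subtype.val '' (Subtype.val ⁻¹' A) ∈ I t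
        rwa [image_val_preimage_val_of_subset hA₂]
      obtain ⟨B, hB𝒜, hAB⟩ := hcov t ht _ hA'
        ((preimage_mono hAT).trans (preimage_image_eq T Subtype.val_injective).subset)
      refine ⟨_, mem_image_of_mem _ hB𝒜, ?_⟩
      exact (image_val_preimage_val_of_subset hA₂).symm.subset.trans (image_mono hAB)
    · rintro _ ⟨B, hB, rfl⟩
      simpa only [preimage_image_eq _ Subtype.val_injective] using hd B hB
    · rintro _ ⟨B, hB, rfl⟩
      simpa only [preimage_image_eq _ Subtype.val_injective] using ih B hB

end Restriction

theorem stmt3_general {L : Type u} [LinearOrder L] (I : L → Set (Set L)) (K : L → Set L)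
    (hI : IsFSITemplate I)
    (L₁ L₂ : Set L) (h2 : KClosed K L₂) (h1 : KClosed K L₁) (hsub : L₁ ⊆ L₂) :
    IsFSITemplate (fun t : L₂ => {A : Set L₂ | Subtype.val '' A ∈ I ↑t}) ∧
    KClosed (fun t : L₂ => {s : L₂ | (s : L) ∈ K ↑t}) (Subtype.val ⁻¹' L₁) ∧
    (∀ ζ, DpLe (fun t : L₂ => {A : Set L₂ | Subtype.val '' A ∈ I ↑t})
        (fun t : L₂ => {s : L₂ | (s : L) ∈ K ↑t}) (Subtype.val ⁻¹' L₁) ζ ↔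
      DpLe I K L₁ ζ) := by
  refine ⟨hI.restrict L₂, h1.preimage_val L₂,
    fun ζ => ⟨fun h => ?_, fun h => h.preimage_val hsub⟩⟩
  simpa only [image_val_preimage_val_of_subset hsub] using
    DpLe.image_val (fun t => (hI t).2.2.1) h2 h

/-- Restriction of a template to a K-closed subset `L₂` preserves templatehood,
K-closedness and depth: `𝔱↾L₂` (with ideals `I_t ∩ 𝒫(L₂)`, realized on the subtype of
`L₂`) is an FSI-template, `L₁` is `K↾L₂`-closed, and its depth in `𝔱↾L₂` equals its
depth in `𝔱`. -/
theorem stmt3 {L : Type u} [LinearOrder L] (I : L → Set (Set L)) (K : L → Set L)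
    (hI : IsFSITemplate I) (hK : IsMemoryChoice I K)
    (L₁ L₂ : Set L) (h2 : KClosed K L₂) (h1 : KClosed K L₁) (hsub : L₁ ⊆ L₂) :
    IsFSITemplate (fun t : L₂ => {A : Set L₂ | Subtype.val '' A ∈ I ↑t}) ∧
    KClosed (fun t : L₂ => {s : L₂ | (s : L) ∈ K ↑t}) (Subtype.val ⁻¹' L₁) ∧
    (∀ ζ, DpLe (fun t : L₂ => {A : Set L₂ | Subtype.val '' A ∈ I ↑t})
        (fun t : L₂ => {s : L₂ | (s : L) ∈ K ↑t}) (Subtype.val ⁻¹' L₁) ζ ↔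
      DpLe I K L₁ ζ) :=
  stmt3_general I K hI L₁ L₂ h2 h1 hsub
end

section
/- If (t, K) is a smooth FSI-template (i.e. Dp(L, K) < ∞) then: (a) for every t ∈ L and A ∈ I_t there is a K-closed B ∈ I_t with A ⊆ B; and (b) if s ∈ L₁ ∈ I_t and L₂ ∈ I_s then L₁ ∪ L₂ ∈ I_t. -/
/-!
Both parts hold relative to any set `S` of bounded depth, by induction on the depth. At a
successor step, the sets `A ∈ I t` with `t ∈ S` miss the removed point, so they lie in `S \ L*`;
either `t ∈ L*`, and `S \ L* ∈ I t` is itself the witness, or the induction hypothesis for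
`S \ L*` applies. At a limit step, directedness puts all the data into a single member of the
family, where the induction hypothesis applies.
-/

universe u

/-- `(𝔱, K)` is smooth: the depth of the whole order is an ordinal (`< ∞`). -/
def SmoothT {L : Type u} [LinearOrder L] (I : L → Set (Set L)) (K : L → Set L) : Prop :=
  ∃ ζ, DpLe I K Set.univ ζ

namespace DpLe

variable {L : Type u} [LinearOrder L] {I : L → Set (Set L)} {K : L → Set L}
  {S : Set L} {ζ : Ordinal.{u}}

theorem exists_kClosed_superset (h : DpLe I K S ζ) :
    ∀ t ∈ S, ∀ A ∈ I t, A ⊆ S → ∃ B ∈ I t, KClosed K B ∧ A ⊆ B ∧ B ⊆ S := by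
  induction h with
  | zero => simp
  | succ S ζ Lstar _ _ hdisj hcl hmem _ ih =>
    intro t ht A hA hAS
    have hA' : A ⊆ S \ Lstar :=
      Set.subset_sdiff.2 ⟨hAS, Set.disjoint_iff_inter_eq_empty.2 (hdisj t ht A hA)⟩
    by_cases htL : t ∈ Lstar
    · exact ⟨S \ Lstar, hmem t htL, hcl, hA', Set.sdiff_subset⟩
    · obtain ⟨B, hB, hBcl, hAB, hBS⟩ := ih t ⟨ht, htL⟩ A hA hA'
      exact ⟨B, hB, hBcl, hAB, hBS.trans Set.sdiff_subset⟩
  | limit S ζ _ 𝒜 _ hsub hdir hU hcov _ _ _ ih =>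
    intro t ht A hA hAS
    obtain ⟨B₀, hB₀, hAB₀⟩ := hcov t ht A hA hAS
    obtain ⟨C, hC, htC⟩ := Set.mem_sUnion.1 (hU ▸ ht)
    obtain ⟨D, hD, hB₀D, hCD⟩ := hdir B₀ hB₀ C hC
    obtain ⟨B, hB, hBcl, hAB, hBD⟩ := ih D hD t (hCD htC) A hA (hAB₀.trans hB₀D)
    exact ⟨B, hB, hBcl, hAB, hBD.trans (hsub D hD)⟩

theorem union_mem (hI : IsFSITemplate I) (h : DpLe I K S ζ) :
    ∀ t ∈ S, ∀ L₁ ∈ I t, L₁ ⊆ S → ∀ s ∈ L₁, ∀ L₂ ∈ I s, L₂ ⊆ S → L₁ ∪ L₂ ∈ I t := by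
  induction h with
  | zero => simp
  | succ S ζ Lstar _ _ hdisj _ hmem _ ih =>
    intro t ht L₁ hL₁ hL₁S s hs L₂ hL₂ hL₂S
    have hL₁' : L₁ ⊆ S \ Lstar :=
      Set.subset_sdiff.2 ⟨hL₁S, Set.disjoint_iff_inter_eq_empty.2 (hdisj t ht L₁ hL₁)⟩
    have hL₂' : L₂ ⊆ S \ Lstar :=
      Set.subset_sdiff.2 ⟨hL₂S, Set.disjoint_iff_inter_eq_empty.2 (hdisj s (hL₁S hs) L₂ hL₂)⟩
    by_cases htL : t ∈ Lstar
    · exact (hI t).2.2.1 _ (hmem t htL) _ (Set.union_subset hL₁' hL₂')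
    · exact ih t ⟨ht, htL⟩ L₁ hL₁ hL₁' s hs L₂ hL₂ hL₂'
  | limit S ζ _ 𝒜 _ _ hdir hU hcov _ _ _ ih =>
    intro t ht L₁ hL₁ hL₁S s hs L₂ hL₂ hL₂S
    obtain ⟨B₁, hB₁, hL₁B₁⟩ := hcov t ht L₁ hL₁ hL₁S
    obtain ⟨B₂, hB₂, hL₂B₂⟩ := hcov s (hL₁S hs) L₂ hL₂ hL₂S
    obtain ⟨C, hC, htC⟩ := Set.mem_sUnion.1 (hU ▸ ht)
    obtain ⟨D, hD, hB₁D, hB₂D⟩ := hdir B₁ hB₁ B₂ hB₂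
    obtain ⟨E, hE, hDE, hCE⟩ := hdir D hD C hC
    exact ih E hE t (hCE htC) L₁ hL₁ (hL₁B₁.trans (hB₁D.trans hDE)) s hs L₂ hL₂
      (hL₂B₂.trans (hB₂D.trans hDE))

end DpLe

theorem stmt4_general {L : Type u} [LinearOrder L] (I : L → Set (Set L)) (K : L → Set L)
    (hI : IsFSITemplate I) (hsm : SmoothT I K) :
    (∀ t : L, ∀ A ∈ I t, ∃ B ∈ I t, KClosed K B ∧ A ⊆ B) ∧
    (∀ t s : L, ∀ L₁ ∈ I t, ∀ L₂ ∈ I s, s ∈ L₁ → L₁ ∪ L₂ ∈ I t) := by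
  obtain ⟨ζ, hζ⟩ := hsm
  refine ⟨fun t A hA => ?_, fun t s L₁ hL₁ L₂ hL₂ hs => ?_⟩
  · obtain ⟨B, hB, hBcl, hAB, -⟩ := hζ.exists_kClosed_superset t trivial A hA (Set.subset_univ A)
    exact ⟨B, hB, hBcl, hAB⟩
  · exact hζ.union_mem hI t trivial L₁ hL₁ (Set.subset_univ _) s hs L₂ hL₂ (Set.subset_univ _)

/-- For smooth `(𝔱,K)`: (a) every `A ∈ I t` is contained in a K-closed `B ∈ I t`;
(b) if `s ∈ L₁ ∈ I t` and `L₂ ∈ I s` then `L₁ ∪ L₂ ∈ I t`. -/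
theorem stmt4 {L : Type u} [LinearOrder L] (I : L → Set (Set L)) (K : L → Set L)
    (hI : IsFSITemplate I) (hK : IsMemoryChoice I K) (hsm : SmoothT I K) :
    (∀ t : L, ∀ A ∈ I t, ∃ B ∈ I t, KClosed K B ∧ A ⊆ B) ∧
    (∀ t s : L, ∀ L₁ ∈ I t, ∀ L₂ ∈ I s, s ∈ L₁ → L₁ ∪ L₂ ∈ I t) :=
  stmt4_general I K hI hsm
end

section
/- Let J be a linear order and ⟨t_x : x ∈ J⟩ a family of smooth FSI-templates with pairwise disjoint underlying sets. Define t by: L^t = Σ_{x∈J} L^{t_x} (lexicographic-sum order), and for t ∈ L^{t_x}: I^t_t = {A ⊆ L^t : every member of A is < t, A ∩ L^{t_x} ∈ I^{t_x}_t, and {y <_J x : A ∩ L^{t_y} ≠ ∅} is finite}. Then t is a smooth FSI-template. -/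
/-!
A set meeting only finitely many summands `x₁ < ⋯ < xₙ` is stacked from its pieces in the
summands: the part below `xₖ` belongs to every ideal at a point of the summand `xₖ`, while no
ideal at a point below `xₖ` meets that summand, so depths add along the stack and the set has
depth at most `θ * n`, where `θ` bounds the depths of the summands. An ideal of the sum meets only
finitely many summands (finitely many earlier ones and its own), so the sets of finite support
form a directed cover of the sum absorbing every ideal, and the limit rule gives depth
`(θ + 1) * ω`.
-/

universe u

/-- The ideals of the lexicographic-sum template `Σ_{x∈J} 𝔱_x`: for `t` in the `x`-th
summand, `A ∈ I_t` iff every member of `A` is `< t`, `A ∩ L^{𝔱_x} ∈ I^{𝔱_x}_t`, and `A`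
meets only finitely many earlier summands. -/
def sigI {J : Type u} [LinearOrder J] {α : J → Type u} [∀ j, LinearOrder (α j)]
    (I : ∀ j, α j → Set (Set (α j))) : (Σₗ j, α j) → Set (Set (Σₗ j, α j)) := fun t =>
  {A | (∀ s ∈ A, s < t) ∧
    ((fun b : α (ofLex t).1 => toLex (⟨(ofLex t).1, b⟩ : Σ j, α j)) ⁻¹' A) ∈
      I (ofLex t).1 (ofLex t).2 ∧
    {y : J | y < (ofLex t).1 ∧ ∃ b : α y, toLex (⟨y, b⟩ : Σ j, α j) ∈ A}.Finite}

open Set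

section Depth

variable {L : Type u} [LinearOrder L] {I : L → Set (Set L)}

theorem kClosed_const_empty (A : Set L) : KClosed (fun _ => (∅ : Set L)) A :=
  fun _ _ _ hs => absurd hs (notMem_empty _)

theorem DpLe.of_isSuccLimit {S : Set L} {ζ : Ordinal.{u}} (hζ : Order.IsSuccLimit ζ)
    (𝒜 : Set (Set L)) (hsub : ∀ A ∈ 𝒜, A ⊆ S) (hdir : DirectedOn (· ⊆ ·) 𝒜) (hU : ⋃₀ 𝒜 = S)
    (hcov : ∀ t ∈ S, ∀ A ∈ I t, A ⊆ S → ∃ B ∈ 𝒜, A ⊆ B)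
    (hd : ∀ A ∈ 𝒜, ∃ ξ < ζ, DpLe I (fun _ => ∅) A ξ) :
    DpLe I (fun _ => ∅) S ζ := by
  choose! d hdζ hdA using hd
  exact .limit S ζ hζ 𝒜 (fun A _ => kClosed_const_empty A) hsub hdir hU hcov d hdζ hdA

theorem DpLe.subset (hI : IsFSITemplate I) {S T : Set L} {ζ : Ordinal.{u}}
    (h : DpLe I (fun _ => ∅) S ζ) (hTS : T ⊆ S) : DpLe I (fun _ => ∅) T ζ := by
  induction h generalizing T with
  | zero => rw [subset_empty_iff.mp hTS]; exact .zero
  | succ S ζ Lstar hsub hsing hdisj _ hmem _ ih =>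
    have hdiff : T \ (Lstar ∩ T) = T \ Lstar := sdiff_inter_self_eq_sdiff
    refine .succ T ζ (Lstar ∩ T) inter_subset_right (hsing.anti inter_subset_left) ?_
      (kClosed_const_empty _) ?_ ?_
    · intro t ht A hA
      exact subset_empty_iff.mp <| hdisj t (hTS ht) A hA ▸ inter_subset_inter_right _
        inter_subset_left
    · intro t ht
      exact hdiff ▸ (hI t).2.2.1 _ (hmem t ht.1) _ (sdiff_subset_sdiff_left hTS)
    · exact hdiff ▸ ih (sdiff_subset_sdiff_left hTS)
  | limit S ζ hζ 𝒜 _ _ hdir hU hcov d hd _ ih =>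
    refine .of_isSuccLimit hζ ((· ∩ T) '' 𝒜) (by rintro _ ⟨A, -, rfl⟩; exact inter_subset_right)
      (hdir.mono_comp fun _ _ h => inter_subset_inter_left T h) ?_ ?_ ?_
    · rw [sUnion_image, ← iUnion₂_inter, ← sUnion_eq_biUnion, hU, inter_eq_right.mpr hTS]
    · intro t ht A hA hAT
      obtain ⟨B, hB, hAB⟩ := hcov t (hTS ht) A hA (hAT.trans hTS)
      exact ⟨B ∩ T, mem_image_of_mem _ hB, subset_inter hAB hAT⟩
    · rintro _ ⟨A, hA, rfl⟩
      exact ⟨d A, hd A hA, ih A hA inter_subset_left⟩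

theorem IsFSITemplate.disjoint_of_forall_mem (hI : IsFSITemplate I) {S T : Set L}
    (h : ∀ t ∈ T, S ∈ I t) : Disjoint S T :=
  disjoint_left.mpr fun t htS htT => lt_irrefl t ((hI t).1 S (h t htT) htS)

theorem DpLe.union (hI : IsFSITemplate I) {S₁ S₂ : Set L} {β₁ β₂ : Ordinal.{u}}
    (h₁ : DpLe I (fun _ => ∅) S₁ β₁) (h₂ : DpLe I (fun _ => ∅) S₂ β₂)
    (hbelow : ∀ t ∈ S₁, ∀ A ∈ I t, Disjoint A S₂) (habove : ∀ t ∈ S₂, S₁ ∈ I t) :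
    DpLe I (fun _ => ∅) (S₁ ∪ S₂) (β₁ + β₂) := by
  induction h₂ with
  | zero => simpa using h₁
  | succ S₂ ζ Lstar hsub hsing hdisj _ hmem _ ih =>
    have hS₁L : Disjoint S₁ Lstar := (hI.disjoint_of_forall_mem habove).mono_right hsub
    have hdiff : (S₁ ∪ S₂) \ Lstar = S₁ ∪ S₂ \ Lstar := by
      rw [union_sdiff_distrib, hS₁L.sdiff_eq_left]
    rw [← add_assoc]
    refine .succ _ _ Lstar (hsub.trans subset_union_right) hsing ?_ (kClosed_const_empty _) ?_ ?_
    · rintro t (ht | ht) A hA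
      · exact disjoint_iff_inter_eq_empty.mp ((hbelow t ht A hA).mono_right hsub)
      · exact hdisj t ht A hA
    · intro t ht
      rw [hdiff]
      exact (hI t).2.2.2 _ (habove t (hsub ht)) _ (hmem t ht)
    · rw [hdiff]
      exact ih (fun t ht A hA => (hbelow t ht A hA).mono_right sdiff_subset)
        (fun t ht => habove t ht.1)
  | limit S₂ ζ hζ 𝒜 _ hsub hdir hU hcov d hd _ ih =>
    -- `S₁` itself joins the cover, which is otherwise empty when `S₂ = ∅`.
    refine .of_isSuccLimit (Ordinal.isSuccLimit_add β₁ hζ) (insert S₁ ((S₁ ∪ ·) '' 𝒜))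
      ?_ ?_ ?_ ?_ ?_
    · rintro _ (rfl | ⟨A, hA, rfl⟩)
      · exact subset_union_left
      · exact union_subset_union_right _ (hsub A hA)
    · refine (hdir.mono_comp fun _ _ h => union_subset_union_right S₁ h).insert S₁ ?_
      rintro _ ⟨A, hA, rfl⟩
      exact ⟨S₁ ∪ A, mem_image_of_mem _ hA, subset_union_left, subset_rfl⟩
    · rw [sUnion_insert, sUnion_image, ← hU]
      ext
      simp only [mem_union, mem_iUnion, exists_prop]
      grind
    · rintro t (ht | ht) A hA hAS
      · exact ⟨S₁, mem_insert _ _, (hbelow t ht A hA).subset_left_of_subset_union hAS⟩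
      · obtain ⟨B, hB, hAB⟩ := hcov t ht (A ∩ S₂) ((hI t).2.2.1 A hA _ inter_subset_left)
          inter_subset_right
        refine ⟨S₁ ∪ B, mem_insert_of_mem _ (mem_image_of_mem _ hB), fun p hp => ?_⟩
        exact (hAS hp).imp id fun hpS₂ => hAB ⟨hp, hpS₂⟩
    · rintro _ (rfl | ⟨A, hA, rfl⟩)
      · exact ⟨β₁, lt_add_of_pos_right β₁ hζ.pos, h₁⟩
      · exact ⟨β₁ + d A, (add_lt_add_iff_left β₁).mpr (hd A hA),
          ih A hA (fun t ht A' hA' => (hbelow t ht A' hA').mono_right (hsub A hA))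
            (fun t ht => habove t (hsub A hA ht))⟩

theorem DpLe.image {M : Type u} [LinearOrder M] {I' : M → Set (Set M)} {f : L → M}
    (hf : Function.Injective f) (hpre : ∀ t, ∀ A ∈ I' (f t), f ⁻¹' A ∈ I t)
    (himg : ∀ t, ∀ C ∈ I t, f '' C ∈ I' (f t)) {C : Set L} {ζ : Ordinal.{u}}
    (h : DpLe I (fun _ => ∅) C ζ) : DpLe I' (fun _ => ∅) (f '' C) ζ := by
  induction h with
  | zero => rw [image_empty]; exact .zero
  | succ C ζ Lstar hsub hsing hdisj _ hmem _ ih =>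
    have hdiff : f '' C \ f '' Lstar = f '' (C \ Lstar) := (image_sdiff hf _ _).symm
    refine .succ _ ζ (f '' Lstar) (image_mono hsub) (hsing.image f) ?_ (kClosed_const_empty _)
      ?_ (hdiff ▸ ih)
    · rintro _ ⟨t, ht, rfl⟩ A hA
      rw [inter_comm, ← image_inter_preimage, inter_comm, hdisj t ht _ (hpre t A hA), image_empty]
    · rintro _ ⟨t, ht, rfl⟩
      exact hdiff ▸ himg t _ (hmem t ht)
  | limit C ζ hζ 𝒜 _ hsub hdir hU hcov d hd _ ih =>
    refine .of_isSuccLimit hζ ((f '' ·) '' 𝒜)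
      (by rintro _ ⟨A, hA, rfl⟩; exact image_mono (hsub A hA))
      (hdir.mono_comp fun _ _ h => image_mono h) (by rw [← hU, image_sUnion]) ?_ ?_
    · rintro _ ⟨t, ht, rfl⟩ A hA hAC
      obtain ⟨B, hB, hAB⟩ := hcov t ht _ (hpre t A hA) ((preimage_mono hAC).trans
        (preimage_image_eq C hf).subset)
      refine ⟨f '' B, mem_image_of_mem _ hB, ?_⟩
      calc A = f '' (f ⁻¹' A) :=
            (image_preimage_eq_of_subset (hAC.trans (image_subset_range _ _))).symm
        _ ⊆ f '' B := image_mono hAB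
    · rintro _ ⟨A, hA, rfl⟩
      exact ⟨d A, hd A hA, ih A hA⟩

end Depth

section LexSum

variable {J : Type u} {α : J → Type u}

def lexIn (x : J) (b : α x) : Σₗ j, α j := toLex ⟨x, b⟩

def lexSupport (B : Set (Σₗ j, α j)) : Set J := {y | ∃ b : α y, lexIn y b ∈ B}

theorem exists_lexIn_eq (p : Σₗ j, α j) : ∃ x b, lexIn x b = p :=
  ⟨(ofLex p).1, (ofLex p).2, rfl⟩

theorem lexIn_injective (x : J) : Function.Injective (lexIn (α := α) x) :=
  fun _ _ h => eq_of_heq (Sigma.mk.inj_iff.mp (toLex.injective h)).2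

theorem lexSupport_mono {A B : Set (Σₗ j, α j)} (h : A ⊆ B) : lexSupport A ⊆ lexSupport B :=
  fun _ ⟨b, hb⟩ => ⟨b, h hb⟩

theorem lexSupport_union (A B : Set (Σₗ j, α j)) :
    lexSupport (A ∪ B) = lexSupport A ∪ lexSupport B := by
  ext y
  simp [lexSupport, exists_or]

theorem lexSupport_singleton (p : Σₗ j, α j) : lexSupport {p} = {(ofLex p).1} := by
  ext y
  constructor
  · rintro ⟨b, rfl⟩
    rfl
  · rintro rfl
    exact ⟨(ofLex p).2, rfl⟩

variable [LinearOrder J] [∀ j, LinearOrder (α j)]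

theorem lexIn_strictMono (x : J) : StrictMono (lexIn (α := α) x) :=
  fun _ _ h => Sigma.Lex.lt_def.mpr (Or.inr ⟨rfl, h⟩)

theorem lexIn_lt_lexIn_of_lt {x y : J} (h : y < x) (b : α y) (c : α x) : lexIn y b < lexIn x c :=
  Sigma.Lex.lt_def.mpr (Or.inl h)

theorem le_of_lexIn_lt_lexIn {x y : J} {b : α y} {c : α x} (h : lexIn y b < lexIn x c) :
    y ≤ x := by
  rcases Sigma.Lex.lt_def.mp h with hyx | ⟨hyx, -⟩
  exacts [hyx.le, hyx.le]

variable {I : ∀ j, α j → Set (Set (α j))}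

theorem isFSITemplate_sigI (htemp : ∀ j, IsFSITemplate (I j)) : IsFSITemplate (sigI I) := by
  intro t
  set x := (ofLex t).1
  refine ⟨fun A hA => hA.1, ⟨fun _ h => h.elim, (htemp x _).2.1, by simp⟩, ?_, ?_⟩
  · intro A hA B hBA
    exact ⟨fun s hs => hA.1 s (hBA hs), (htemp x _).2.2.1 _ hA.2.1 _ (preimage_mono hBA),
      hA.2.2.subset (inter_subset_inter_right _ (lexSupport_mono hBA))⟩
  · intro A hA B hB
    refine ⟨fun s hs => hs.elim (hA.1 s) (hB.1 s), (htemp x _).2.2.2 _ hA.2.1 _ hB.2.1, ?_⟩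
    change (Iio x ∩ lexSupport (A ∪ B)).Finite
    rw [lexSupport_union, inter_union_distrib_left]
    exact hA.2.2.union hB.2.2

theorem lexSupport_finite_of_mem_sigI {t : Σₗ j, α j} {A : Set (Σₗ j, α j)} (hA : A ∈ sigI I t) :
    (lexSupport A).Finite := by
  refine (hA.2.2.union (finite_singleton (ofLex t).1)).subset fun y ⟨b, hb⟩ => ?_
  obtain ⟨x, c, rfl⟩ := exists_lexIn_eq t
  exact (le_of_lexIn_lt_lexIn (hA.1 _ hb)).lt_or_eq.imp (fun hyx => ⟨hyx, b, hb⟩) id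

theorem mem_sigI_of_forall_lexSupport_lt (htemp : ∀ j, IsFSITemplate (I j)) {x : J} (t : α x)
    {B : Set (Σₗ j, α j)} (hB : (lexSupport B).Finite) (hlt : ∀ y ∈ lexSupport B, y < x) :
    B ∈ sigI I (lexIn x t) := by
  refine ⟨fun s hs => ?_, ?_, hB.subset inter_subset_right⟩
  · obtain ⟨y, b, rfl⟩ := exists_lexIn_eq s
    exact lexIn_lt_lexIn_of_lt (hlt y ⟨b, hs⟩) b t
  · have hempty : lexIn x ⁻¹' B = ∅ :=
      eq_empty_of_forall_notMem fun b hb => lt_irrefl x (hlt x ⟨b, hb⟩)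
    exact hempty ▸ (htemp x t).2.1

theorem DpLe.lexIn_image (htemp : ∀ j, IsFSITemplate (I j)) {x : J} {C : Set (α x)}
    {ζ : Ordinal.{u}} (h : DpLe (I x) (fun _ => ∅) C ζ) :
    DpLe (sigI I) (fun _ => ∅) (lexIn x '' C) ζ := by
  refine h.image (lexIn_injective x) (fun t A hA => hA.2.1) fun t C hC => ?_
  refine ⟨?_, ?_, ?_⟩
  · rintro _ ⟨b, hb, rfl⟩
    exact lexIn_strictMono x ((htemp x t).1 C hC hb)
  · exact (preimage_image_eq C (lexIn_injective x)).symm ▸ hC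
  · refine finite_empty.subset fun y ⟨hyx, b, c, _, hcb⟩ => ?_
    exact (hyx.ne (congrArg (fun p => (ofLex p).1) hcb).symm).elim

theorem exists_dpLe_sigI_of_lexSupport_subset (htemp : ∀ j, IsFSITemplate (I j))
    {θ : Ordinal.{u}} (hθ : ∀ j, ∃ ξ ≤ θ, DpLe (I j) (fun _ => ∅) univ ξ) (F : Finset J) :
    ∀ B : Set (Σₗ j, α j), lexSupport B ⊆ F →
      ∃ ξ ≤ θ * F.card, DpLe (sigI I) (fun _ => ∅) B ξ := by
  classical
  induction F using Finset.induction_on_max with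
  | empty =>
    intro B hB
    have hempty : B = ∅ := eq_empty_of_forall_notMem fun p hp => by
      obtain ⟨x, b, rfl⟩ := exists_lexIn_eq p
      simpa using hB ⟨b, hp⟩
    rw [hempty]
    exact ⟨0, zero_le, .zero⟩
  | insert a F hlt ih =>
    intro B hB
    have hB₁ : lexSupport (B \ range (lexIn a)) ⊆ F := by
      rintro y ⟨b, hb, hnot⟩
      rcases Finset.mem_insert.mp (hB ⟨b, hb⟩) with rfl | hy
      · exact (hnot ⟨b, rfl⟩).elim
      · exact hy
    have hlow : ∀ y ∈ lexSupport (B \ range (lexIn a)), y < a := fun y hy => hlt y (hB₁ hy)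
    obtain ⟨ξ₁, hξ₁, h₁⟩ := ih _ hB₁
    obtain ⟨ξ₂, hξ₂, h₂⟩ := hθ a
    have h₂' : DpLe (sigI I) (fun _ => ∅) (B ∩ range (lexIn a)) ξ₂ := by
      rw [← image_preimage_eq_inter_range]
      exact (h₂.subset (htemp a) (subset_univ _)).lexIn_image htemp
    refine ⟨ξ₁ + ξ₂, ?_, sdiff_union_inter B _ ▸ h₁.union (isFSITemplate_sigI htemp) h₂' ?_ ?_⟩
    · calc ξ₁ + ξ₂ ≤ θ * F.card + θ := add_le_add hξ₁ hξ₂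
        _ = θ * (insert a F).card := by
          rw [Finset.card_insert_of_notMem fun h => lt_irrefl a (hlt a h), Nat.cast_succ,
            mul_add_one]
    · intro t ht A hA
      obtain ⟨y, c, rfl⟩ := exists_lexIn_eq t
      refine disjoint_left.mpr fun p hpA ⟨_, b, hb⟩ => ?_
      subst hb
      exact (hlow y ⟨c, ht⟩).not_ge (le_of_lexIn_lt_lexIn (hA.1 _ hpA))
    · rintro _ ⟨-, t, rfl⟩
      exact mem_sigI_of_forall_lexSupport_lt htemp t (F.finite_toSet.subset hB₁) hlow

theorem dpLe_sigI_univ (htemp : ∀ j, IsFSITemplate (I j)) {θ : Ordinal.{u}}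
    (hθ : ∀ j, ∃ ξ ≤ θ, DpLe (I j) (fun _ => ∅) univ ξ) :
    DpLe (sigI I) (fun _ => ∅) univ ((θ + 1) * Ordinal.omega0) := by
  have hpos : 0 < θ + 1 := lt_add_of_le_of_pos zero_le one_pos
  refine .of_isSuccLimit (Ordinal.isSuccLimit_mul_right hpos Ordinal.isSuccLimit_omega0)
    {B | (lexSupport B).Finite} (fun B _ => subset_univ B) ?_ ?_ ?_ ?_
  · intro B hB B' hB'
    refine ⟨B ∪ B', ?_, subset_union_left, subset_union_right⟩
    change (lexSupport (B ∪ B')).Finite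
    exact lexSupport_union B B' ▸ hB.union hB'
  · refine eq_univ_of_forall fun p => ⟨{p}, ?_, rfl⟩
    change (lexSupport {p}).Finite
    exact lexSupport_singleton p ▸ finite_singleton _
  · exact fun t _ A hA _ => ⟨A, lexSupport_finite_of_mem_sigI hA, subset_rfl⟩
  · intro B hB
    obtain ⟨ξ, hξ, hBξ⟩ :=
      exists_dpLe_sigI_of_lexSupport_subset htemp hθ hB.toFinset B hB.coe_toFinset.superset
    refine ⟨ξ, ?_, hBξ⟩
    calc ξ ≤ θ * hB.toFinset.card := hξ
      _ ≤ (θ + 1) * hB.toFinset.card := mul_le_mul_left le_self_add _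
      _ < (θ + 1) * Ordinal.omega0 := mul_lt_mul_of_pos_left (Ordinal.natCast_lt_omega0 _) hpos

end LexSum

/-- The lexicographic sum along a linear order `J` of smooth FSI-templates (with pairwise
disjoint underlying sets) is a smooth FSI-template (trivial memory choice). -/
theorem stmt10 {J : Type u} [LinearOrder J] {α : J → Type u} [∀ j, LinearOrder (α j)]
    (I : ∀ j, α j → Set (Set (α j)))
    (htemp : ∀ j, IsFSITemplate (I j))
    (hsm : ∀ j, ∃ ζ, DpLe (I j) (fun _ => ∅) Set.univ ζ) :
    IsFSITemplate (sigI I) ∧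
    ∃ ζ, DpLe (sigI I) (fun _ => ∅) Set.univ ζ := by
  refine ⟨isFSITemplate_sigI htemp, ?_⟩
  choose ζ hζ using hsm
  exact ⟨_, dpLe_sigI_univ htemp fun j => ⟨ζ j, le_ciSup Ordinal.bddAbove_of_small j, hζ j⟩⟩
end

section
/- Let λ be an uncountable regular cardinal, L₀⁺ a linear order isomorphic to λ, L₀⁻ its reverse (anti-isomorphic to λ) disjoint from it, and L₀ = L₀⁻ + L₀⁺. Define J on ^{ω>}(L₀) by: η <_J ν iff for some n, η↾n = ν↾n and either (|η| = n and ν(n) ∈ L₀⁺) or (|ν| = n and η(n) ∈ L₀⁻) or (|η| > n, |ν| > n and L₀ ⊨ η(n) < ν(n)). Then J is a linear order, and every nonempty open interval of J (as well as J itself) has cardinality λ. -/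
/-- `L₀ = L₀⁻ + L₀⁺`, where `L₀⁺` is a linear order isomorphic to `λ` (the canonical
well-order of type `λ`) and `L₀⁻` is its reverse, placed below it. -/
def L0 (lam : Cardinal.{0}) : Type := (lam.ord.ToType)ᵒᵈ ⊕ₗ lam.ord.ToType

noncomputable instance (lam : Cardinal.{0}) : LinearOrder (L0 lam) := by
  unfold L0; infer_instance

/-- The order `J` on the finite sequences `^{ω>}(L₀)`: `η <_J ν` iff for some `n`,
`η↾n = ν↾n` and either `η` ends at `n` and `ν(n) ∈ L₀⁺`, or `ν` ends at `n` and
`η(n) ∈ L₀⁻`, or both continue and `η(n) < ν(n)` in `L₀`. -/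
def JLT (lam : Cardinal.{0}) (η ν : List (L0 lam)) : Prop :=
  ∃ n : ℕ, η.take n = ν.take n ∧
    ((η.length = n ∧ ∃ h : n < ν.length, ∃ b, ofLex (ν.get ⟨n, h⟩) = Sum.inr b) ∨
     (ν.length = n ∧ ∃ h : n < η.length, ∃ b, ofLex (η.get ⟨n, h⟩) = Sum.inl b) ∨
     (∃ hη : n < η.length, ∃ hν : n < ν.length, η.get ⟨n, hη⟩ < ν.get ⟨n, hν⟩))

/-!
Append to every word an end marker `⊥` placed between `L₀⁻` and `L₀⁺`. Then `η <_J ν` is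
exactly the lexicographic comparison of the marked words, and the marking is injective, so `J`
is a linear order.

There are at most `|L₀|^{<ω} = λ` words. Conversely, if `a <_J x <_J b`, then every extension of
`x` by a word starting in `L₀⁻` lies below `x`, hence below `b`. If `a` is not itself such an
extension of `x`, all `x⁀⟨u⟩` with `u ∈ L₀⁻` lie above `a`. Otherwise `a = x⁀⟨c⟩⁀t` with
`c ∈ L₀⁻`, and `x⁀⟨c, γ⟩` lies above `a` for all `γ ∈ L₀⁺` beyond the first letter of `t`.
These are `λ` many, because every proper initial segment of `λ` has size `< λ`.
-/

universe u

open Cardinal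
open scoped Ordinal

lemma Cardinal.mk_Ioi_eq {α : Type*} [LinearOrder α] [WellFoundedLT α] [Infinite α]
    (i : α) (h : (#α).ord = typeLT α) : #(Set.Ioi i) = #α := by
  rw [← Set.compl_Iic]
  exact mk_compl_of_infinite _ (mk_Iic_lt i h (aleph0_le_mk α))

lemma Cardinal.mk_le_mk_of_mapsTo {α β : Type u} {f : α → β} {S : Set α} {T : Set β}
    (hf : Function.Injective f) (h : Set.MapsTo f S T) : #S ≤ #T :=
  mk_le_of_injective (h.restrict_inj.mpr hf.injOn)

lemma Cardinal.mk_Ioi_ord_toType {c : Cardinal.{u}} (hc : ℵ₀ ≤ c) (i : c.ord.ToType) :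
    #(Set.Ioi i) = c := by
  have : Infinite c.ord.ToType := infinite_iff.mpr (by rwa [mk_ord_toType])
  rw [mk_Ioi_eq i (by rw [mk_ord_toType, Ordinal.type_toType]), mk_ord_toType]

namespace TreeOrder

variable {lam : Cardinal.{0}}

abbrev Marked (lam : Cardinal.{0}) : Type := (lam.ord.ToType)ᵒᵈ ⊕ₗ WithBot lam.ord.ToType

def endMark : Marked lam := toLex (Sum.inr ⊥)

def mark (z : L0 lam) : Marked lam := toLex (Sum.map id WithBot.some (ofLex z))

def encode (η : List (L0 lam)) : List (Marked lam) := η.map mark ++ [endMark]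

def negLetter (u : (lam.ord.ToType)ᵒᵈ) : L0 lam := toLex (Sum.inl u)

def posLetter (γ : lam.ord.ToType) : L0 lam := toLex (Sum.inr γ)

lemma mark_strictMono : StrictMono (mark (lam := lam)) := by
  rintro (a | a) (b | b) h
  · exact Sum.Lex.inl_lt_inl_iff.mpr (Sum.Lex.inl_lt_inl_iff.mp h)
  · exact Sum.Lex.inl_lt_inr _ _
  · exact absurd h Sum.Lex.not_inr_lt_inl
  · exact Sum.Lex.inr_lt_inr_iff.mpr (WithBot.coe_lt_coe.mpr (Sum.Lex.inr_lt_inr_iff.mp h))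

lemma mark_ne_endMark (z : L0 lam) : mark z ≠ endMark := by
  obtain ⟨u | γ, rfl⟩ := toLex.surjective z <;> simp [mark, endMark]

lemma mark_lt_endMark_iff {z : L0 lam} : mark z < endMark ↔ ∃ u, ofLex z = Sum.inl u := by
  obtain ⟨u | γ, rfl⟩ := toLex.surjective z <;> simp [mark, endMark]

lemma endMark_lt_mark_iff {z : L0 lam} : endMark < mark z ↔ ∃ γ, ofLex z = Sum.inr γ := by
  obtain ⟨u | γ, rfl⟩ := toLex.surjective z <;> simp [mark, endMark]

lemma mark_negLetter_lt_endMark (u : (lam.ord.ToType)ᵒᵈ) : mark (negLetter u) < endMark := by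
  simp [negLetter, mark, endMark]

lemma endMark_lt_mark_posLetter (γ : lam.ord.ToType) : endMark < mark (posLetter γ) := by
  simp [posLetter, mark, endMark]

lemma negLetter_injective : Function.Injective (negLetter (lam := lam)) :=
  toLex.injective.comp Sum.inl_injective

lemma posLetter_injective : Function.Injective (posLetter (lam := lam)) :=
  toLex.injective.comp Sum.inr_injective

lemma not_jlt_nil_nil : ¬ JLT lam [] [] := by
  rintro ⟨n, -, ⟨-, h, -⟩ | ⟨-, h, -⟩ | ⟨h, -⟩⟩ <;> simp at h

lemma jlt_nil_cons_iff {y : L0 lam} {t : List (L0 lam)} :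
    JLT lam [] (y :: t) ↔ endMark < mark y := by
  rw [endMark_lt_mark_iff]
  constructor
  · rintro ⟨n, -, ⟨hn, _, γ, hγ⟩ | ⟨-, h, -⟩ | ⟨h, -⟩⟩
    · subst hn
      exact ⟨γ, hγ⟩
    all_goals simp at h
  · rintro ⟨γ, hγ⟩
    exact ⟨0, rfl, Or.inl ⟨rfl, by simp, γ, hγ⟩⟩

lemma jlt_cons_nil_iff {x : L0 lam} {s : List (L0 lam)} :
    JLT lam (x :: s) [] ↔ mark x < endMark := by
  rw [mark_lt_endMark_iff]
  constructor
  · rintro ⟨n, -, ⟨-, h, -⟩ | ⟨hn, _, u, hu⟩ | ⟨-, h, -⟩⟩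
    · simp at h
    · subst hn
      exact ⟨u, hu⟩
    · simp at h
  · rintro ⟨u, hu⟩
    exact ⟨0, rfl, Or.inr (Or.inl ⟨rfl, by simp, u, hu⟩)⟩

lemma jlt_cons_cons_iff {x y : L0 lam} {s t : List (L0 lam)} :
    JLT lam (x :: s) (y :: t) ↔ x < y ∨ x = y ∧ JLT lam s t := by
  constructor
  · rintro ⟨_ | n, hst, hcase⟩
    · rcases hcase with ⟨hn, -⟩ | ⟨hn, -⟩ | ⟨_, _, hlt⟩
      · simp at hn
      · simp at hn
      · exact Or.inl hlt
    · rw [List.take_succ_cons, List.take_succ_cons, List.cons_eq_cons] at hst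
      obtain ⟨rfl, hst⟩ := hst
      exact Or.inr ⟨rfl, n, hst, by simpa using hcase⟩
  · rintro (hlt | ⟨rfl, n, hst, hcase⟩)
    · exact ⟨0, rfl, Or.inr (Or.inr ⟨by simp, by simp, hlt⟩)⟩
    · exact ⟨n + 1, by simpa using hst, by simpa using hcase⟩

lemma jlt_iff_encode_lt {η ν : List (L0 lam)} : JLT lam η ν ↔ encode η < encode ν := by
  induction η generalizing ν with
  | nil =>
    rcases ν with _ | ⟨y, t⟩
    · simp [not_jlt_nil_nil, encode]
    · simp [jlt_nil_cons_iff, encode, List.cons_lt_cons_iff, (mark_ne_endMark y).symm]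
  | cons x s ih =>
    rcases ν with _ | ⟨y, t⟩
    · simp [jlt_cons_nil_iff, encode, List.cons_lt_cons_iff, mark_ne_endMark x]
    · simp [jlt_cons_cons_iff, encode, List.cons_lt_cons_iff, mark_strictMono.lt_iff_lt,
        mark_strictMono.injective.eq_iff, ih]

lemma encode_injective : Function.Injective (encode (lam := lam)) := fun _ _ h =>
  (List.map_injective_iff.mpr mark_strictMono.injective) (List.append_cancel_right h)

lemma jlt_irrefl (η : List (L0 lam)) : ¬ JLT lam η η := by
  rw [jlt_iff_encode_lt]
  exact lt_irrefl _

lemma jlt_trans {η ν ρ : List (L0 lam)} (h₁ : JLT lam η ν) (h₂ : JLT lam ν ρ) : JLT lam η ρ :=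
  jlt_iff_encode_lt.mpr (lt_trans (jlt_iff_encode_lt.mp h₁) (jlt_iff_encode_lt.mp h₂))

lemma jlt_trichotomy (η ν : List (L0 lam)) : JLT lam η ν ∨ η = ν ∨ JLT lam ν η := by
  simp only [jlt_iff_encode_lt, ← encode_injective.eq_iff]
  exact lt_trichotomy _ _

lemma jlt_append_append_iff (w s t : List (L0 lam)) :
    JLT lam (w ++ s) (w ++ t) ↔ JLT lam s t := by
  induction w with
  | nil => rfl
  | cons p w ih =>
    simp only [List.cons_append, jlt_cons_cons_iff, lt_irrefl, true_and, false_or, ih]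

lemma append_cons_jlt_self (x t : List (L0 lam)) {c : L0 lam} (hc : mark c < endMark) :
    JLT lam (x ++ c :: t) x := by
  rw [jlt_iff_encode_lt, encode, encode, List.map_append, List.append_assoc]
  exact List.Lex.append_left _ (List.Lex.rel hc) _

lemma jlt_append_or_eq_append_cons {a x : List (L0 lam)} (h : JLT lam a x)
    (s : List (L0 lam)) : JLT lam a (x ++ s) ∨ ∃ c t, mark c < endMark ∧ a = x ++ c :: t := by
  induction a generalizing x with
  | nil =>
    rcases x with _ | ⟨y, t⟩
    · exact absurd h not_jlt_nil_nil
    · exact Or.inl (jlt_nil_cons_iff.mpr (jlt_nil_cons_iff.mp h))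
  | cons p a ih =>
    rcases x with _ | ⟨y, x⟩
    · exact Or.inr ⟨p, a, jlt_cons_nil_iff.mp h, rfl⟩
    · rcases jlt_cons_cons_iff.mp h with hlt | ⟨rfl, hax⟩
      · exact Or.inl (jlt_cons_cons_iff.mpr (Or.inl hlt))
      · rcases ih hax with hax' | ⟨c, t, hc, rfl⟩
        · exact Or.inl (jlt_cons_cons_iff.mpr (Or.inr ⟨rfl, hax'⟩))
        · exact Or.inr ⟨c, t, hc, rfl⟩

lemma mk_L0 (hlam : ℵ₀ ≤ lam) : #(L0 lam) = lam := by
  change #(lam.ord.ToType ⊕ lam.ord.ToType) = lam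
  rw [mk_sum, lift_id, mk_ord_toType, add_eq_self hlam]

lemma mk_list_L0 (hlam : ℵ₀ ≤ lam) : #(List (L0 lam)) = lam := by
  have : Infinite (L0 lam) := infinite_iff.mpr (by rwa [mk_L0 hlam])
  rw [mk_list_eq_mk, mk_L0 hlam]

lemma le_mk_setOf_jlt_posLetter (hlam : ℵ₀ ≤ lam) (t : List (L0 lam)) :
    lam ≤ #{γ | JLT lam t [posLetter γ]} := by
  have of_forall (h : ∀ γ, JLT lam t [posLetter γ]) : lam ≤ #{γ | JLT lam t [posLetter γ]} :=
    calc lam = #(Set.univ : Set lam.ord.ToType) := by rw [mk_univ, mk_ord_toType]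
      _ ≤ _ := mk_le_mk_of_subset fun γ _ => h γ
  rcases t with _ | ⟨c, t⟩
  · exact of_forall fun γ => jlt_nil_cons_iff.mpr (endMark_lt_mark_posLetter γ)
  · obtain ⟨u | δ, rfl⟩ := toLex.surjective c
    · exact of_forall fun γ => jlt_cons_cons_iff.mpr (Or.inl (Sum.Lex.inl_lt_inr _ _))
    · refine (mk_Ioi_ord_toType hlam δ).ge.trans (mk_le_mk_of_subset fun γ hγ => ?_)
      exact jlt_cons_cons_iff.mpr (Or.inl (Sum.Lex.inr_lt_inr_iff.mpr hγ))

lemma le_mk_interval (hlam : ℵ₀ ≤ lam) {a x b : List (L0 lam)} (hax : JLT lam a x)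
    (hxb : JLT lam x b) : lam ≤ #{y | JLT lam a y ∧ JLT lam y b} := by
  by_cases ha : ∃ c t, mark c < endMark ∧ a = x ++ c :: t
  · obtain ⟨c, t, hc, rfl⟩ := ha
    have hinj : Function.Injective fun γ => (x ++ [c]) ++ [posLetter γ] := fun γ γ' h =>
      posLetter_injective (List.singleton_inj.mp (List.append_cancel_left h))
    refine (le_mk_setOf_jlt_posLetter hlam t).trans (mk_le_mk_of_mapsTo hinj fun γ hγ => ?_)
    exact ⟨by simpa using (jlt_append_append_iff (x ++ [c]) t [posLetter γ]).mpr hγ,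
      jlt_trans (by simpa using append_cons_jlt_self x [posLetter γ] hc) hxb⟩
  · have hinj : Function.Injective fun u => x ++ [negLetter u] := fun u u' h =>
      negLetter_injective (List.singleton_inj.mp (List.append_cancel_left h))
    refine (mk_ord_toType lam).ge.trans ((mk_univ (α := (lam.ord.ToType)ᵒᵈ)).ge.trans
      (mk_le_mk_of_mapsTo hinj fun u _ => ?_))
    exact ⟨(jlt_append_or_eq_append_cons hax _).resolve_right ha,
      jlt_trans (append_cons_jlt_self x [] (mark_negLetter_lt_endMark u)) hxb⟩

end TreeOrder

theorem stmt18_general (lam : Cardinal.{0})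
    (hunc : Cardinal.aleph0 < lam) :
    (∀ η, ¬ JLT lam η η) ∧
    (∀ η ν ρ, JLT lam η ν → JLT lam ν ρ → JLT lam η ρ) ∧
    (∀ η ν, JLT lam η ν ∨ η = ν ∨ JLT lam ν η) ∧
    Cardinal.mk (List (L0 lam)) = lam ∧
    (∀ a b : List (L0 lam), JLT lam a b →
      (∃ x, JLT lam a x ∧ JLT lam x b) →
      Cardinal.mk {x | JLT lam a x ∧ JLT lam x b} = lam) := by
  open TreeOrder in
  exact ⟨jlt_irrefl, fun _ _ _ => jlt_trans, jlt_trichotomy, mk_list_L0 hunc.le,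
    fun _ _ _ ⟨_, hax, hxb⟩ => le_antisymm ((mk_set_le _).trans (mk_list_L0 hunc.le).le)
      (le_mk_interval hunc.le hax hxb)⟩

/-- For `λ` regular uncountable, `J = ^{ω>}(L₀)` with the order above is a linear order,
and every nonempty open interval of `J`, as well as `J` itself, has cardinality `λ`. -/
theorem stmt18 (lam : Cardinal.{0}) (hreg : lam.IsRegular)
    (hunc : Cardinal.aleph0 < lam) :
    (∀ η, ¬ JLT lam η η) ∧
    (∀ η ν ρ, JLT lam η ν → JLT lam ν ρ → JLT lam η ρ) ∧
    (∀ η ν, JLT lam η ν ∨ η = ν ∨ JLT lam ν η) ∧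
    Cardinal.mk (List (L0 lam)) = lam ∧
    (∀ a b : List (L0 lam), JLT lam a b →
      (∃ x, JLT lam a x ∧ JLT lam x b) →
      Cardinal.mk {x | JLT lam a x ∧ JLT lam x b} = lam) :=
  stmt18_general lam hunc
end

section
/- With J = ^{ω>}(L₀) ordered as above (L₀ = L₀⁻ + L₀⁺, λ regular uncountable): if θ is either 0 or 1 or an uncountable regular cardinal < λ, and ⟨t_i : i < θ⟩ is strictly decreasing in J, then the suborder {y ∈ J : ∀i < θ, y <_J t_i}, if nonempty, has cofinality λ. Moreover, the reverse order of J is isomorphic to J. -/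
open Cardinal

universe u

theorem Cardinal.IsRegular.exists_forall_lt {κ : Cardinal.{u}} (hκ : κ.IsRegular) {ι : Type u}
    (f : ι → κ.ord.ToType) (hι : #ι < κ) : ∃ δ, ∀ i, f i < δ := by
  have hcof : ¬ IsCofinal (Set.range f) := fun hc =>
    ((Order.cof_le hc).trans mk_range_le).not_gt (by rwa [Ordinal.cof_toType, hκ.cof_ord])
  simpa using not_isCofinal_iff.1 hcof

theorem exists_least_strict_upper_bound {ι α : Type*} [LinearOrder α] [WellFoundedLT α] {a : ι → α}
    (hbdd : ∃ d, ∀ i, a i < d) (hnomax : ∀ i, ∃ j, a i < a j) :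
    ∃ δ, (∀ i, a i < δ) ∧ ∀ c < δ, ∃ i, c < a i := by
  obtain ⟨δ, hδ, hmin⟩ := wellFounded_lt.has_min {d | ∀ i, a i < d} hbdd
  refine ⟨δ, hδ, fun c hc => ?_⟩
  obtain ⟨i, hi⟩ : ∃ i, c ≤ a i := by
    by_contra! h
    exact hmin c h hc
  obtain ⟨j, hj⟩ := hnomax i
  exact ⟨j, hi.trans_lt hj⟩

theorem exists_maximal_eventual_prefix {α ι : Type*} [LinearOrder ι] [Nonempty ι]
    (hι : ∀ f : ℕ → ι, ∃ j, ∀ n, f n ≤ j) (t : ι → List α) :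
    ∃ p i₀, (∀ i, i₀ ≤ i → p <+: t i) ∧ ∀ x j, ∃ i, j ≤ i ∧ ¬ p ++ [x] <+: t i := by
  let P : ℕ → Prop := fun n => ∃ p : List α, p.length = n ∧ ∃ i₀, ∀ i, i₀ ≤ i → p <+: t i
  have hP0 : P 0 := ⟨[], rfl, Classical.arbitrary ι, fun _ _ => List.nil_prefix⟩
  have hPbdd : ¬ ∀ n, P n := by
    intro hP
    choose q hq i₀ hi₀ using hP
    obtain ⟨j, hj⟩ := hι i₀
    have := (hi₀ ((t j).length + 1) j (hj _)).length_le
    rw [hq] at this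
    omega
  obtain ⟨n, ⟨p, rfl, i₀, hp⟩, hn⟩ : ∃ n, P n ∧ ¬ P (n + 1) := by
    by_contra! h
    exact hPbdd fun n => Nat.rec hP0 h n
  refine ⟨p, i₀, hp, fun x j => ?_⟩
  by_contra! h
  exact hn ⟨p ++ [x], by simp, j, h⟩

section Cofinality

variable {α : Type u} {r : α → α → Prop} {κ : Cardinal.{u}} {Y : Set α} {g : κ.ord.ToType → α}

theorem exists_cofinal_mk_eq [Std.Irrefl r] (hg : ∀ b c, b < c → r (g b) (g c))
    (hgY : ∀ b, g b ∈ Y) (hcof : ∀ y ∈ Y, ∃ b, r y (g b)) :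
    ∃ S : Set α, S ⊆ Y ∧ (∀ y ∈ Y, ∃ z ∈ S, y = z ∨ r y z) ∧ #S = κ := by
  have hinj : Function.Injective g := by
    intro b c h
    by_contra hbc
    rcases lt_or_gt_of_ne hbc with hbc | hbc
    · exact irrefl _ (h ▸ hg b c hbc)
    · exact irrefl _ (h ▸ hg c b hbc)
  refine ⟨Set.range g, Set.range_subset_iff.2 hgY, fun y hy => ?_, ?_⟩
  · obtain ⟨b, hb⟩ := hcof y hy
    exact ⟨g b, ⟨b, rfl⟩, Or.inr hb⟩
  · rw [mk_range_eq g hinj, mk_toType, card_ord]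

theorem le_mk_of_cofinal [IsTrans α r] [Std.Irrefl r] (hκ : κ.IsRegular)
    (hg : ∀ b c, b < c → r (g b) (g c)) (hgY : ∀ b, g b ∈ Y) (hcof : ∀ y ∈ Y, ∃ b, r y (g b))
    {S : Set α} (hSY : S ⊆ Y) (hS : ∀ y ∈ Y, ∃ z ∈ S, y = z ∨ r y z) : κ ≤ #S := by
  by_contra! hlt
  choose β hβ using fun s : S => hcof s (hSY s.2)
  obtain ⟨δ, hδ⟩ := hκ.exists_forall_lt β hlt
  obtain ⟨z, hz, hδz⟩ := hS (g δ) (hgY δ)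
  have hδβ : r (g δ) (g (β ⟨z, hz⟩)) := by
    rcases hδz with h | h
    · exact h ▸ hβ ⟨z, hz⟩
    · exact _root_.trans h (hβ ⟨z, hz⟩)
  exact irrefl _ (_root_.trans hδβ (hg _ _ (hδ _)))

end Cofinality

variable {lam : Cardinal.{0}}

namespace L0

def neg (a : lam.ord.ToType) : L0 lam := toLex (Sum.inl (OrderDual.toDual a))

def pos (b : lam.ord.ToType) : L0 lam := toLex (Sum.inr b)

theorem neg_or_pos (x : L0 lam) : (∃ a, x = neg a) ∨ ∃ b, x = pos b := by
  rcases h : ofLex x with a | b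
  · exact Or.inl ⟨OrderDual.ofDual a, congrArg toLex h⟩
  · exact Or.inr ⟨b, congrArg toLex h⟩

@[simp] theorem neg_lt_neg_iff {a b : lam.ord.ToType} : neg a < neg b ↔ b < a :=
  Sum.Lex.inl_lt_inl_iff

@[simp] theorem pos_lt_pos_iff {a b : lam.ord.ToType} : pos a < pos b ↔ a < b :=
  Sum.Lex.inr_lt_inr_iff

@[simp] theorem neg_lt_pos (a b : lam.ord.ToType) : neg a < pos b :=
  Sum.Lex.inl_lt_inr _ _

@[simp] theorem not_pos_lt_neg (a b : lam.ord.ToType) : ¬ pos b < neg a :=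
  Sum.Lex.not_inr_lt_inl

@[simp] theorem neg_ne_pos (a b : lam.ord.ToType) : neg a ≠ pos b :=
  fun h => Sum.inl_ne_inr (toLex.injective h)

@[simp] theorem pos_ne_neg (a b : lam.ord.ToType) : pos b ≠ neg a :=
  (neg_ne_pos a b).symm

end L0

open L0

theorem jlt_nil_nil : ¬ JLT lam [] [] := by
  simp [JLT]

theorem jlt_nil_cons {x : L0 lam} {l : List (L0 lam)} :
    JLT lam [] (x :: l) ↔ ∃ b, x = pos b := by
  constructor
  · rintro ⟨n, -, ⟨rfl, _, b, hb⟩ | ⟨-, h, -⟩ | ⟨h, -⟩⟩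
    · exact ⟨b, congrArg toLex hb⟩
    · simp at h
    · simp at h
  · rintro ⟨b, rfl⟩
    exact ⟨0, rfl, Or.inl ⟨rfl, by simp, b, rfl⟩⟩

theorem jlt_cons_nil {x : L0 lam} {l : List (L0 lam)} :
    JLT lam (x :: l) [] ↔ ∃ a, x = neg a := by
  constructor
  · rintro ⟨n, -, ⟨-, h, -⟩ | ⟨rfl, _, a, ha⟩ | ⟨-, h, -⟩⟩
    · simp at h
    · exact ⟨OrderDual.ofDual a, congrArg toLex ha⟩
    · simp at h
  · rintro ⟨a, rfl⟩
    exact ⟨0, rfl, Or.inr (Or.inl ⟨rfl, by simp, OrderDual.toDual a, rfl⟩)⟩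

theorem jlt_cons_cons {x y : L0 lam} {l l' : List (L0 lam)} :
    JLT lam (x :: l) (y :: l') ↔ x < y ∨ x = y ∧ JLT lam l l' := by
  constructor
  · rintro ⟨_ | n, ht, hd⟩
    · rcases hd with ⟨h, -⟩ | ⟨h, -⟩ | ⟨_, _, hxy⟩
      · simp at h
      · simp at h
      · exact Or.inl hxy
    · simp only [List.take_succ_cons, List.cons.injEq] at ht
      exact Or.inr ⟨ht.1, n, ht.2, by simpa using hd⟩
  · rintro (hxy | ⟨rfl, n, ht, hd⟩)
    · exact ⟨0, rfl, Or.inr (Or.inr ⟨by simp, by simp, hxy⟩)⟩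
    · exact ⟨n + 1, by simpa using ht, by simpa using hd⟩

/-- Ending every sequence with `mid`, the bottom of `WithBot`, which sits between `L₀⁻` and `L₀⁺`,
turns `JLT` into the lexicographic order. -/
abbrev L0Mid (lam : Cardinal.{0}) : Type := (lam.ord.ToType)ᵒᵈ ⊕ₗ WithBot lam.ord.ToType

namespace L0

def embed (x : L0 lam) : L0Mid lam := toLex (Sum.map id WithBot.some (ofLex x))

def mid : L0Mid lam := toLex (Sum.inr ⊥)

@[simp] theorem embed_neg (a : lam.ord.ToType) :
    embed (neg a) = toLex (Sum.inl (OrderDual.toDual a)) := rfl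

@[simp] theorem embed_pos (b : lam.ord.ToType) :
    embed (pos b) = toLex (Sum.inr (b : WithBot lam.ord.ToType)) := rfl

theorem embed_lt_embed {x y : L0 lam} : embed x < embed y ↔ x < y := by
  rcases neg_or_pos x with ⟨a, rfl⟩ | ⟨a, rfl⟩ <;>
    rcases neg_or_pos y with ⟨b, rfl⟩ | ⟨b, rfl⟩ <;> simp

theorem embed_injective : Function.Injective (embed : L0 lam → L0Mid lam) :=
  StrictMono.injective fun _ _ => embed_lt_embed.2

theorem embed_lt_mid {x : L0 lam} : embed x < mid ↔ ∃ a, x = neg a := by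
  rcases neg_or_pos x with ⟨a, rfl⟩ | ⟨a, rfl⟩ <;> simp [mid]

theorem mid_lt_embed {x : L0 lam} : mid < embed x ↔ ∃ b, x = pos b := by
  rcases neg_or_pos x with ⟨a, rfl⟩ | ⟨a, rfl⟩ <;> simp [mid]

theorem embed_ne_mid (x : L0 lam) : embed x ≠ mid := by
  rcases neg_or_pos x with ⟨a, rfl⟩ | ⟨a, rfl⟩ <;> simp [mid]

end L0

def markEnd (l : List (L0 lam)) : List (L0Mid lam) := l.map embed ++ [mid]

theorem jlt_iff_markEnd_lt {l l' : List (L0 lam)} : JLT lam l l' ↔ markEnd l < markEnd l' := by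
  induction l generalizing l' with
  | nil =>
    cases l' with
    | nil => simp [jlt_nil_nil]
    | cons y l' =>
      simp [markEnd, jlt_nil_cons, List.cons_lt_cons_iff, mid_lt_embed, (embed_ne_mid y).symm]
  | cons x l ih =>
    cases l' with
    | nil => simp [markEnd, jlt_cons_nil, List.cons_lt_cons_iff, embed_lt_mid, embed_ne_mid]
    | cons y l' =>
      rw [jlt_cons_cons, ih]
      simp [markEnd, List.cons_lt_cons_iff, embed_lt_embed, embed_injective.eq_iff]

theorem jlt_irrefl (l : List (L0 lam)) : ¬ JLT lam l l :=
  fun h => lt_irrefl _ (jlt_iff_markEnd_lt.1 h)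

theorem jlt_trans {l₁ l₂ l₃ : List (L0 lam)} (h₁₂ : JLT lam l₁ l₂) (h₂₃ : JLT lam l₂ l₃) :
    JLT lam l₁ l₃ :=
  jlt_iff_markEnd_lt.2 ((jlt_iff_markEnd_lt.1 h₁₂).trans (jlt_iff_markEnd_lt.1 h₂₃))

theorem jlt_asymm {l l' : List (L0 lam)} (h : JLT lam l l') : ¬ JLT lam l' l :=
  fun h' => jlt_irrefl l (jlt_trans h h')

instance : Std.Irrefl (JLT lam) := ⟨jlt_irrefl⟩

instance : IsTrans (List (L0 lam)) (JLT lam) := ⟨fun _ _ _ => jlt_trans⟩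

@[simp] theorem jlt_append_left_iff {p l l' : List (L0 lam)} :
    JLT lam (p ++ l) (p ++ l') ↔ JLT lam l l' := by
  induction p with
  | nil => rfl
  | cons x p ih => simp [jlt_cons_cons, ih]

theorem jlt_append_cons_of_lt (p : List (L0 lam)) {x y : L0 lam} (h : x < y)
    (r r' : List (L0 lam)) : JLT lam (p ++ x :: r) (p ++ y :: r') :=
  jlt_append_left_iff.2 (jlt_cons_cons.2 (Or.inl h))

theorem le_of_jlt_append_cons {p r r' : List (L0 lam)} {x y : L0 lam}
    (h : JLT lam (p ++ x :: r) (p ++ y :: r')) : x ≤ y := by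
  rcases jlt_cons_cons.1 (jlt_append_left_iff.1 h) with h | ⟨h, -⟩
  exacts [h.le, h.le]

theorem jlt_append_neg (p : List (L0 lam)) (a : lam.ord.ToType) (r : List (L0 lam)) :
    JLT lam (p ++ neg a :: r) p := by
  simpa using (jlt_append_left_iff (p := p)).2 (jlt_cons_nil.2 ⟨a, rfl⟩ : JLT lam (neg a :: r) [])

def PosExtensionsCofinal (z : List (L0 lam)) (Y : Set (List (L0 lam))) : Prop :=
  (∀ b, z ++ [pos b] ∈ Y) ∧ ∀ y ∈ Y, ∃ b, JLT lam y (z ++ [pos b])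

section Cut

variable [NoMaxOrder lam.ord.ToType]

theorem exists_jlt_singleton_pos [Nonempty lam.ord.ToType] (y : List (L0 lam)) :
    ∃ b, JLT lam y [pos b] := by
  obtain ⟨b₀⟩ := ‹Nonempty lam.ord.ToType›
  rcases y with _ | ⟨x, r⟩
  · exact ⟨b₀, jlt_nil_cons.2 ⟨b₀, rfl⟩⟩
  rcases neg_or_pos x with ⟨a, rfl⟩ | ⟨c, rfl⟩
  · exact ⟨b₀, jlt_cons_cons.2 (Or.inl (neg_lt_pos a b₀))⟩
  · obtain ⟨b, hb⟩ := exists_gt c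
    exact ⟨b, jlt_cons_cons.2 (Or.inl (pos_lt_pos_iff.2 hb))⟩

theorem exists_jlt_append_neg_pos {p y : List (L0 lam)} {δ : lam.ord.ToType} (hy : JLT lam y p)
    (hδ : ∀ c r, y = p ++ neg c :: r → δ ≤ c) : ∃ b, JLT lam y (p ++ [neg δ] ++ [pos b]) := by
  induction p generalizing y with
  | nil =>
    rcases y with _ | ⟨x, r⟩
    · exact absurd hy jlt_nil_nil
    obtain ⟨c, rfl⟩ := jlt_cons_nil.1 hy
    rcases (hδ c r rfl).lt_or_eq with hδc | rfl
    · exact ⟨δ, jlt_cons_cons.2 (Or.inl (neg_lt_neg_iff.2 hδc))⟩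
    · have : Nonempty lam.ord.ToType := ⟨δ⟩
      obtain ⟨b, hb⟩ := exists_jlt_singleton_pos r
      exact ⟨b, jlt_cons_cons.2 (Or.inr ⟨rfl, hb⟩)⟩
  | cons x p ih =>
    rcases y with _ | ⟨x', r⟩
    · exact ⟨δ, jlt_nil_cons.2 (jlt_nil_cons.1 hy)⟩
    rcases jlt_cons_cons.1 hy with hx | ⟨rfl, hr⟩
    · exact ⟨δ, jlt_cons_cons.2 (Or.inl hx)⟩
    · obtain ⟨b, hb⟩ := ih hr fun c r' h => hδ c r' (by rw [h]; rfl)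
      exact ⟨b, jlt_cons_cons.2 (Or.inr ⟨rfl, hb⟩)⟩

theorem posExtensionsCofinal_nil [Nonempty lam.ord.ToType] :
    PosExtensionsCofinal [] (Set.univ : Set (List (L0 lam))) :=
  ⟨fun _ => trivial, fun y _ => by simpa using exists_jlt_singleton_pos y⟩

theorem posExtensionsCofinal_append_neg_bot (p : List (L0 lam)) {δ : lam.ord.ToType}
    (hδ : IsBot δ) : PosExtensionsCofinal (p ++ [neg δ]) {y | JLT lam y p} :=
  ⟨fun b => by simpa using jlt_append_neg p δ [pos b],
    fun _ hy => exists_jlt_append_neg_pos hy fun c _ _ => hδ c⟩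

theorem posExtensionsCofinal_of_eq_append_neg {ι : Type*} [Nonempty ι] {t : ι → List (L0 lam)}
    {p : List (L0 lam)} {a : ι → lam.ord.ToType} {δ : lam.ord.ToType}
    (ht : ∀ i, ∃ r, t i = p ++ neg (a i) :: r) (hδ : ∀ i, a i < δ)
    (hδ' : ∀ c < δ, ∃ i, c < a i) :
    PosExtensionsCofinal (p ++ [neg δ]) {y | ∀ i, JLT lam y (t i)} := by
  refine ⟨fun b i => ?_, fun y hy => exists_jlt_append_neg_pos ?_ ?_⟩
  · obtain ⟨r, hr⟩ := ht i
    rw [hr, List.append_assoc]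
    exact jlt_append_cons_of_lt p (neg_lt_neg_iff.2 (hδ i)) _ _
  · obtain ⟨i⟩ := ‹Nonempty ι›
    obtain ⟨r, hr⟩ := ht i
    exact jlt_trans (hy i) (hr ▸ jlt_append_neg p _ r)
  · rintro c r rfl
    by_contra! hc
    obtain ⟨i, hi⟩ := hδ' c hc
    obtain ⟨r', hr'⟩ := ht i
    exact jlt_asymm (hy i) (hr' ▸ jlt_append_cons_of_lt p (neg_lt_neg_iff.2 hi) _ _)

end Cut

section Decreasing

variable {ι : Type*} [LinearOrder ι] {t : ι → List (L0 lam)}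

theorem setOf_forall_jlt_comp (ht : ∀ i j, i < j → JLT lam (t j) (t i)) {k : ι → ι}
    (hk : ∀ i, i ≤ k i) : {y | ∀ i, JLT lam y (t (k i))} = {y | ∀ i, JLT lam y (t i)} := by
  ext y
  refine ⟨fun hy i => ?_, fun hy i => hy (k i)⟩
  rcases (hk i).lt_or_eq with h | h
  · exact jlt_trans (hy i) (ht _ _ h)
  · rw [h]
    exact hy i

theorem exists_eventually_neg [Nonempty ι] {s : ι → L0 lam} (hs : Antitone s)
    (hstep : ∀ i, ∃ j, s j < s i) : ∃ i₀, ∀ i, i₀ ≤ i → ∃ a, s i = neg a := by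
  by_contra! h
  have hpos : ∀ i₀, ∃ i, i₀ ≤ i ∧ ∃ b, s i = pos b := fun i₀ => by
    obtain ⟨i, hi, hneg⟩ := h i₀
    exact ⟨i, hi, (neg_or_pos (s i)).resolve_left fun ⟨a, ha⟩ => hneg a ha⟩
  obtain ⟨i, -, b, hb⟩ := hpos (Classical.arbitrary ι)
  obtain ⟨b₀, ⟨i₁, hi₁⟩, hmin⟩ := wellFounded_lt.has_min {b | ∃ i, s i = pos b} ⟨b, i, hb⟩
  obtain ⟨j, hj⟩ := hstep i₁
  obtain ⟨k, hjk, b, hb⟩ := hpos j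
  have : pos b < pos b₀ := hb ▸ hi₁ ▸ (hs hjk).trans_lt hj
  exact hmin b ⟨k, hb⟩ (pos_lt_pos_iff.1 this)

theorem exists_forall_eq_append_cons [NoMaxOrder ι] (ht : ∀ i j, i < j → JLT lam (t j) (t i))
    {p : List (L0 lam)} {i₀ : ι} (hp : ∀ i, i₀ ≤ i → p <+: t i) :
    ∃ i₁, ∀ i, i₁ ≤ i → ∃ x r, t i = p ++ x :: r := by
  obtain ⟨i₁, h₀₁, h₁⟩ : ∃ i₁, i₀ ≤ i₁ ∧ ∀ i, i₁ ≤ i → t i ≠ p := by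
    by_cases h : ∃ k, t k = p
    · obtain ⟨k, hk⟩ := h
      obtain ⟨i₁, hi₁⟩ := exists_gt (max i₀ k)
      refine ⟨i₁, (le_max_left _ _).trans hi₁.le, fun i hi heq => jlt_irrefl p ?_⟩
      have := ht k i ((le_max_right _ _).trans_lt (hi₁.trans_le hi))
      rwa [heq, hk] at this
    · exact ⟨i₀, le_rfl, fun i _ heq => h ⟨i, heq⟩⟩
  refine ⟨i₁, fun i hi => ?_⟩
  obtain ⟨_ | ⟨x, r⟩, hu⟩ := hp i (h₀₁.trans hi)
  · exact absurd (by simpa using hu.symm) (h₁ i hi)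
  · exact ⟨x, r, hu.symm⟩

/-- Past the longest eventual prefix `p`, the next coordinates decrease without stabilising, so
they end up in `L₀⁻`; `k` reindexes the sequence into that tail. -/
theorem exists_reindex_eq_append_neg [NoMaxOrder ι] (ht : ∀ i j, i < j → JLT lam (t j) (t i))
    {p : List (L0 lam)} {i₀ : ι} (hp : ∀ i, i₀ ≤ i → p <+: t i)
    (hmax : ∀ x j, ∃ i, j ≤ i ∧ ¬ p ++ [x] <+: t i) :
    ∃ (k : ι → ι) (a : ι → lam.ord.ToType), (∀ i, i ≤ k i) ∧
      (∀ i, ∃ r, t (k i) = p ++ neg (a i) :: r) ∧ ∀ i, ∃ j, a i < a j := by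
  have : Nonempty ι := ⟨i₀⟩
  obtain ⟨i₁, h₁⟩ := exists_forall_eq_append_cons ht hp
  choose s r hsr using fun i => h₁ (max i i₁) (le_max_right _ _)
  have hs : Antitone s := by
    intro i j hij
    rcases (max_le_max_right i₁ hij).lt_or_eq with h | h
    · have := ht _ _ h
      rw [hsr i, hsr j] at this
      exact le_of_jlt_append_cons this
    · have := (hsr i).symm.trans (h ▸ hsr j)
      simp only [List.append_cancel_left_eq, List.cons.injEq] at this
      exact this.1.ge
  have hstep : ∀ i, ∃ j, s j < s i := by
    intro i
    obtain ⟨j, hij, hj⟩ := hmax (s i) (max i i₁)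
    refine ⟨j, (hs ((le_max_left _ _).trans hij)).lt_of_ne fun heq => hj ?_⟩
    rw [← max_eq_left ((le_max_right _ _).trans hij), hsr j, heq]
    simp
  obtain ⟨i₂, h₂⟩ := exists_eventually_neg hs hstep
  choose a ha using fun i => h₂ (max i i₂) (le_max_right _ _)
  refine ⟨fun i => max (max i i₂) i₁, a, fun i => (le_max_left _ _).trans (le_max_left _ _),
    fun i => ⟨r _, by rw [hsr, ha]⟩, fun i => ?_⟩
  obtain ⟨j, hj⟩ := hstep (max i i₂)
  have : neg (a j) < neg (a i) := ha j ▸ ha i ▸ (hs (le_max_left j i₂)).trans_lt hj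
  exact ⟨j, neg_lt_neg_iff.1 this⟩

end Decreasing

theorem exists_posExtensionsCofinal_of_isRegular (hreg : lam.IsRegular) {θ : Cardinal.{0}}
    (hθ : θ.IsRegular) (hθω : ℵ₀ < θ) (hθlam : θ < lam) (t : θ.ord.ToType → List (L0 lam))
    (ht : ∀ i j, i < j → JLT lam (t j) (t i)) :
    ∃ z, PosExtensionsCofinal z {y | ∀ i, JLT lam y (t i)} := by
  have := Cardinal.noMaxOrder hreg.aleph0_le
  have := Cardinal.noMaxOrder hθ.aleph0_le
  have : Nonempty θ.ord.ToType := Ordinal.nonempty_toType_iff.2 hθ.ord_pos.ne'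
  have hω : ∀ f : ℕ → θ.ord.ToType, ∃ j, ∀ n, f n ≤ j := fun f =>
    (hθ.exists_forall_lt f (by simpa using hθω)).imp fun _ h n => (h n).le
  obtain ⟨p, i₀, hp, hmax⟩ := exists_maximal_eventual_prefix hω t
  obtain ⟨k, a, hk, hka, ha⟩ := exists_reindex_eq_append_neg ht hp hmax
  obtain ⟨δ, hδ, hδ'⟩ :=
    exists_least_strict_upper_bound (hreg.exists_forall_lt a (by simpa using hθlam)) ha
  refine ⟨p ++ [neg δ], ?_⟩
  rw [← setOf_forall_jlt_comp ht hk]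
  exact posExtensionsCofinal_of_eq_append_neg hka hδ hδ'

theorem exists_posExtensionsCofinal (hreg : lam.IsRegular) {θ : Cardinal.{0}}
    (hθ : θ = 0 ∨ θ = 1 ∨ (θ.IsRegular ∧ ℵ₀ < θ ∧ θ < lam)) (t : θ.ord.ToType → List (L0 lam))
    (ht : ∀ i j, i < j → JLT lam (t j) (t i)) :
    ∃ z, PosExtensionsCofinal z {y | ∀ i, JLT lam y (t i)} := by
  have := Cardinal.noMaxOrder hreg.aleph0_le
  have : Nonempty lam.ord.ToType := Ordinal.nonempty_toType_iff.2 hreg.ord_pos.ne'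
  rcases hθ with rfl | rfl | ⟨hθ, hθω, hθlam⟩
  · have hY : {y | ∀ i, JLT lam y (t i)} = Set.univ := by simp
    exact ⟨[], hY ▸ posExtensionsCofinal_nil⟩
  · have : Unique (ord 1).ToType := by rw [ord_one]; infer_instance
    have hY : {y | ∀ i, JLT lam y (t i)} = {y | JLT lam y (t default)} := by
      simp only [Unique.forall_iff]
    let := WellFoundedLT.toOrderBot lam.ord.ToType
    exact ⟨_, hY ▸ posExtensionsCofinal_append_neg_bot (t default) isBot_bot⟩
  · exact exists_posExtensionsCofinal_of_isRegular hreg hθ hθω hθlam t ht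

namespace L0

def swap (x : L0 lam) : L0 lam :=
  toLex (Sum.elim (fun a => Sum.inr (OrderDual.ofDual a)) (fun b => Sum.inl (OrderDual.toDual b))
    (ofLex x))

@[simp] theorem swap_neg (a : lam.ord.ToType) : swap (neg a) = pos a := rfl

@[simp] theorem swap_pos (b : lam.ord.ToType) : swap (pos b) = neg b := rfl

theorem swap_involutive : Function.Involutive (swap : L0 lam → L0 lam) := by
  intro x
  rcases neg_or_pos x with ⟨a, rfl⟩ | ⟨b, rfl⟩ <;> rfl

theorem swap_lt_swap {x y : L0 lam} : swap x < swap y ↔ y < x := by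
  rcases neg_or_pos x with ⟨a, rfl⟩ | ⟨a, rfl⟩ <;>
    rcases neg_or_pos y with ⟨b, rfl⟩ | ⟨b, rfl⟩ <;> simp

end L0

theorem jlt_map_swap_iff {l l' : List (L0 lam)} :
    JLT lam (l'.map swap) (l.map swap) ↔ JLT lam l l' := by
  induction l generalizing l' with
  | nil =>
    rcases l' with _ | ⟨y, l'⟩
    · simp
    · rcases neg_or_pos y with ⟨a, rfl⟩ | ⟨b, rfl⟩ <;> simp [jlt_cons_nil, jlt_nil_cons]
  | cons x l ih =>
    rcases l' with _ | ⟨y, l'⟩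
    · rcases neg_or_pos x with ⟨a, rfl⟩ | ⟨b, rfl⟩ <;> simp [jlt_cons_nil, jlt_nil_cons]
    · simp [jlt_cons_cons, swap_lt_swap, swap_involutive.injective.eq_iff, ih, eq_comm]

theorem stmt19_general (lam : Cardinal.{0}) (hreg : lam.IsRegular)
    (θ : Cardinal.{0})
    (hθ : θ = 0 ∨ θ = 1 ∨ (θ.IsRegular ∧ Cardinal.aleph0 < θ ∧ θ < lam))
    (t : θ.ord.ToType → List (L0 lam))
    (hdec : ∀ i j : θ.ord.ToType, i < j → JLT lam (t j) (t i)) :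
    ((Set.Nonempty {y | ∀ i, JLT lam y (t i)}) →
      ((∃ S : Set (List (L0 lam)), S ⊆ {y | ∀ i, JLT lam y (t i)} ∧
          (∀ y ∈ {y | ∀ i, JLT lam y (t i)}, ∃ z ∈ S, y = z ∨ JLT lam y z) ∧
          Cardinal.mk S = lam) ∧
        (∀ S : Set (List (L0 lam)), S ⊆ {y | ∀ i, JLT lam y (t i)} →
          (∀ y ∈ {y | ∀ i, JLT lam y (t i)}, ∃ z ∈ S, y = z ∨ JLT lam y z) →
          lam ≤ Cardinal.mk S))) ∧
    (∃ f : List (L0 lam) ≃ List (L0 lam), ∀ a b, JLT lam a b ↔ JLT lam (f b) (f a)) := by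
  obtain ⟨z, hzY, hzcof⟩ := exists_posExtensionsCofinal hreg hθ t hdec
  have hg : ∀ b c : lam.ord.ToType, b < c → JLT lam (z ++ [pos b]) (z ++ [pos c]) :=
    fun b c h => jlt_append_cons_of_lt z (pos_lt_pos_iff.2 h) [] []
  refine ⟨fun _ => ⟨exists_cofinal_mk_eq hg hzY hzcof, fun S => le_mk_of_cofinal hreg hg hzY hzcof⟩,
    swap_involutive.list_map.toPerm _, fun a b => jlt_map_swap_iff.symm⟩

/-- If `θ` is `0`, `1`, or an uncountable regular cardinal `< λ`, and `⟨t_i : i < θ⟩` is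
strictly decreasing in `J`, then the suborder `{y ∈ J : ∀ i, y <_J t_i}`, if nonempty,
has cofinality `λ` (there is a cofinal subset of cardinality `λ` and every cofinal subset
has cardinality `≥ λ`); moreover the reverse of `J` is isomorphic to `J`. -/
theorem stmt19 (lam : Cardinal.{0}) (hreg : lam.IsRegular)
    (hunc : Cardinal.aleph0 < lam)
    (θ : Cardinal.{0})
    (hθ : θ = 0 ∨ θ = 1 ∨ (θ.IsRegular ∧ Cardinal.aleph0 < θ ∧ θ < lam))
    (t : θ.ord.ToType → List (L0 lam))
    (hdec : ∀ i j : θ.ord.ToType, i < j → JLT lam (t j) (t i)) :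
    ((Set.Nonempty {y | ∀ i, JLT lam y (t i)}) →
      ((∃ S : Set (List (L0 lam)), S ⊆ {y | ∀ i, JLT lam y (t i)} ∧
          (∀ y ∈ {y | ∀ i, JLT lam y (t i)}, ∃ z ∈ S, y = z ∨ JLT lam y z) ∧
          Cardinal.mk S = lam) ∧
        (∀ S : Set (List (L0 lam)), S ⊆ {y | ∀ i, JLT lam y (t i)} →
          (∀ y ∈ {y | ∀ i, JLT lam y (t i)}, ∃ z ∈ S, y = z ∨ JLT lam y z) →
          lam ≤ Cardinal.mk S))) ∧
    (∃ f : List (L0 lam) ≃ List (L0 lam), ∀ a b, JLT lam a b ↔ JLT lam (f b) (f a)) :=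
  stmt19_general lam hreg θ hθ t hdec
end
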